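/- arXiv:1702.05787 — 6 statements merged into one kernel-verified Lean document; each statement's English description precedes it below -/
import Mathlib

section
/- Let U be a unit interval order and let (w_1, ..., w_k) be a sequence of elements of U satisfying w_i ⊁ w_{i+1} for all i. Then the sequence is correct if and only if for each j with 1 ≤ j ≤ k, the subset {w_1, ..., w_j} is connected in the incomparability graph (U, ∼). -/
/-!
Adjacent vertices of the incomparability graph differ by less than `1`, so a walk from a point
`a < t + 1` to a point `b > t - 1` cannot jump over the window `(t - 1, t + 1)`. When `w_j` is
added to the prefix `{w_1, …, w_{j-1}}`, the step condition gives `w_{j-1} < w_j + 1` and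
correctness gives some `w_i > w_j - 1`; a walk between them inside the connected prefix meets a
neighbour of `w_j`. Conversely, if `w_j ≥ w_1 + 1` then the connected prefix up to `w_j` is not a
single point, so `w_j` has a neighbour `w_i`, and `i < j` witnesses correctness.
-/

/-- The incomparability graph of `ℝ` viewed as a unit interval order
(`u ≻ w ↔ u ≥ w + 1`): two distinct reals are adjacent iff `|x - y| < 1`. -/
def IncG : SimpleGraph ℝ := SimpleGraph.fromRel (fun x y => |x - y| < 1)

theorem incG_adj_iff {x y : ℝ} : IncG.Adj x y ↔ x ≠ y ∧ |x - y| < 1 := by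
  simp [IncG, abs_sub_comm]

theorem incG_exists_near_of_walk {S : Set ℝ} {t : ℝ} {a b : S}
    (p : (IncG.induce S).Walk a b) (ha : (a : ℝ) < t + 1) (hb : t < b + 1) :
    ∃ x ∈ S, |x - t| < 1 := by
  induction p with
  | nil => exact ⟨_, Subtype.prop _, abs_sub_lt_iff.mpr ⟨by linarith, by linarith⟩⟩
  | @cons a v b hav p ih =>
    by_cases hat : |(a : ℝ) - t| < 1
    · exact ⟨a, a.2, hat⟩
    · have hav : |(a : ℝ) - v| < 1 := (incG_adj_iff.mp hav).2
      rw [abs_sub_lt_iff] at hav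
      have hat : (a : ℝ) ≤ t - 1 := by
        by_contra h
        exact hat (abs_sub_lt_iff.mpr ⟨by linarith, by linarith⟩)
      exact ih (by linarith) hb

theorem incG_connected_induce_insert {S : Set ℝ} (hS : (IncG.induce S).Connected) {x y : ℝ}
    (hx : x ∈ S) (hxy : |x - y| < 1) : (IncG.induce (insert y S)).Connected := by
  by_cases h : x = y
  · rwa [← h, Set.insert_eq_of_mem hx]
  · rw [Set.insert_eq, Set.union_comm]
    exact SimpleGraph.connected_induce_union hS.preconnected .of_subsingleton hx rfl
      (incG_adj_iff.mpr ⟨h, hxy⟩)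

theorem incG_connected_induce_insert_of_lt {S : Set ℝ} (hS : (IncG.induce S).Connected)
    {a b t : ℝ} (ha : a ∈ S) (hb : b ∈ S) (hat : a < t + 1) (htb : t < b + 1) :
    (IncG.induce (insert t S)).Connected := by
  obtain ⟨p⟩ := hS.preconnected ⟨a, ha⟩ ⟨b, hb⟩
  obtain ⟨x, hx, hxt⟩ := incG_exists_near_of_walk p hat htb
  exact incG_connected_induce_insert hS hx hxt

theorem incG_exists_ne_near_of_connected_induce {S : Set ℝ} (hS : (IncG.induce S).Connected)
    {x y : ℝ} (hx : x ∈ S) (hy : y ∈ S) (hxy : x ≠ y) : ∃ z ∈ S, z ≠ x ∧ |x - z| < 1 := by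
  have : Nontrivial S := Set.nontrivial_coe_sort.mpr ⟨x, hx, y, hy, hxy⟩
  obtain ⟨z, hz⟩ := hS.preconnected.exists_adj_of_nontrivial ⟨x, hx⟩
  obtain ⟨hne, hlt⟩ := incG_adj_iff.mp hz
  exact ⟨z, z.2, hne.symm, hlt⟩

theorem Fin.Iic_eq_insert_Iic {k : ℕ} {i j : Fin k} (h : i.val + 1 = j.val) :
    Set.Iic j = insert j (Set.Iic i) := by
  ext x
  simp only [Set.mem_insert_iff, Set.mem_Iic, Fin.le_iff_val_le_val, Fin.ext_iff]
  omega

theorem Fin.Iic_eq_singleton {k : ℕ} {j : Fin k} (h : j.val = 0) : Set.Iic j = {j} := by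
  ext x
  simp only [Set.mem_singleton_iff, Set.mem_Iic, Fin.le_iff_val_le_val, Fin.ext_iff]
  omega

theorem connected_induce_image_Iic_of_exists_lt {k : ℕ} {w : Fin k → ℝ}
    (hstep : ∀ i : ℕ, (h : i + 1 < k) → w ⟨i, Nat.lt_of_succ_lt h⟩ < w ⟨i + 1, h⟩ + 1)
    (hcorrect : ∀ j : Fin k, 0 < j.1 → ∃ i : Fin k, i < j ∧ ¬ (w i + 1 ≤ w j)) (j : Fin k) :
    (IncG.induce (w '' Set.Iic j)).Connected := by
  obtain ⟨n, hn⟩ : ∃ n, j.val = n := ⟨_, rfl⟩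
  induction n generalizing j with
  | zero =>
    rw [Fin.Iic_eq_singleton hn, Set.image_singleton]
    exact ⟨.of_subsingleton⟩
  | succ n ih =>
    let i : Fin k := ⟨n, by omega⟩
    have hj : j = ⟨n + 1, by omega⟩ := Fin.ext hn
    obtain ⟨i', hi'j, hwi'⟩ := hcorrect j (by omega)
    have hi'i : i' ≤ i := by
      have : i'.val < j.val := hi'j
      show i'.val ≤ n
      omega
    have hwi : w i < w j + 1 := by
      have := hstep n (by omega)
      rwa [← hj] at this
    rw [Fin.Iic_eq_insert_Iic (i := i) hn.symm, Set.image_insert_eq]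
    exact incG_connected_induce_insert_of_lt (ih i rfl) (Set.mem_image_of_mem w Set.self_mem_Iic)
      (Set.mem_image_of_mem w hi'i) hwi (by linarith)

theorem exists_lt_not_add_one_le_of_connected_induce_image_Iic {ι : Type*} [LinearOrder ι]
    {w : ι → ℝ} {o j : ι} (hoj : o < j) (hconn : (IncG.induce (w '' Set.Iic j)).Connected) :
    ∃ i, i < j ∧ ¬ (w i + 1 ≤ w j) := by
  by_cases ho : w j < w o + 1
  · exact ⟨o, hoj, not_le.mpr ho⟩
  obtain ⟨_, ⟨i, hij, rfl⟩, hne, hlt⟩ := incG_exists_ne_near_of_connected_induce hconn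
    ⟨j, Set.self_mem_Iic, rfl⟩ ⟨o, hoj.le, rfl⟩ (by intro h; rw [h] at ho; linarith)
  refine ⟨i, lt_of_le_of_ne hij (by rintro rfl; exact hne rfl), ?_⟩
  rw [abs_sub_lt_iff] at hlt
  linarith

theorem stmt2 (k : ℕ) (w : Fin k → ℝ)
    (hstep : ∀ i : ℕ, (h : i + 1 < k) → ¬ (w ⟨i + 1, h⟩ + 1 ≤ w ⟨i, by omega⟩)) :
    (∀ j : Fin k, 0 < j.1 → ∃ i : Fin k, i < j ∧ ¬ (w i + 1 ≤ w j)) ↔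
    (∀ j : Fin k, (IncG.induce {x : ℝ | ∃ i : Fin k, i ≤ j ∧ w i = x}).Connected) := by
  change _ ↔ ∀ j, (IncG.induce (w '' Set.Iic j)).Connected
  constructor
  · exact connected_induce_image_Iic_of_exists_lt fun i h => not_le.mp (hstep i h)
  · intro hconn j hj
    exact exists_lt_not_add_one_le_of_connected_induce_image_Iic (o := ⟨0, by omega⟩)
      (Fin.lt_def.mpr hj) (hconn j)
end

section
/- A finite poset realized as a finite subset U ⊂ ℝ with order u ≻ w iff u ≥ w + 1 is both (2+2)-free and (3+1)-free. -/
section UnitIntervalOrder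

variable {α : Type*} [AddCommGroup α] [LinearOrder α] [IsOrderedAddMonoid α] {d : α}

theorem le_abs_sub_of_two_chains {a₁ a₂ b₁ b₂ : α}
    (ha : a₁ + d ≤ a₂) (hb : b₁ + d ≤ b₂) (h : |a₁ - b₂| < d) : d ≤ |a₂ - b₁| := by
  by_contra! h'
  have hb₂ : b₂ < a₁ + d := sub_lt_iff_lt_add'.mp (abs_sub_lt_iff.mp h).2
  have ha₂ : a₂ < b₁ + d := sub_lt_iff_lt_add'.mp (abs_sub_lt_iff.mp h').1
  have hba : b₁ < a₁ := lt_of_add_lt_add_right (hb.trans_lt hb₂)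
  exact (ha.trans_lt (ha₂.trans (by gcongr))).false

theorem le_abs_sub_of_three_chain {a₁ a₂ a₃ b : α}
    (h₁₂ : a₁ + d ≤ a₂) (h₂₃ : a₂ + d ≤ a₃) (h : |a₁ - b| < d) : d ≤ |a₃ - b| := by
  by_contra! h'
  have hb : b < a₁ + d := sub_lt_iff_lt_add'.mp (abs_sub_lt_iff.mp h).2
  have ha₃ : a₃ < b + d := sub_lt_iff_lt_add'.mp (abs_sub_lt_iff.mp h').1
  have : b + d < a₂ + d := by gcongr; exact hb.trans_le h₁₂
  exact (h₂₃.trans_lt (ha₃.trans this)).false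

end UnitIntervalOrder

/-- a finite subset `U ⊂ ℝ` with the order `u ≻ w ↔ u ≥ w + 1`
(elements `x, y` being incomparable iff `|x - y| < 1`) is both `(2+2)`-free and
`(3+1)`-free. -/
theorem stmt3 (U : Finset ℝ) :
    (¬ ∃ a₁ ∈ U, ∃ a₂ ∈ U, ∃ b₁ ∈ U, ∃ b₂ ∈ U,
        a₁ + 1 ≤ a₂ ∧ b₁ + 1 ≤ b₂ ∧
        |a₁ - b₁| < 1 ∧ |a₁ - b₂| < 1 ∧ |a₂ - b₁| < 1 ∧ |a₂ - b₂| < 1) ∧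
    (¬ ∃ a₁ ∈ U, ∃ a₂ ∈ U, ∃ a₃ ∈ U, ∃ b ∈ U,
        a₁ + 1 ≤ a₂ ∧ a₂ + 1 ≤ a₃ ∧
        |a₁ - b| < 1 ∧ |a₂ - b| < 1 ∧ |a₃ - b| < 1) := by
  refine ⟨?_, ?_⟩
  · rintro ⟨a₁, -, a₂, -, b₁, -, b₂, -, ha, hb, -, h₁₂, h₂₁, -⟩
    exact (le_abs_sub_of_two_chains ha hb h₁₂).not_gt h₂₁
  · rintro ⟨a₁, -, a₂, -, a₃, -, b, -, h₁₂, h₂₃, h₁, -, h₃⟩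
    exact (le_abs_sub_of_three_chain h₁₂ h₂₃ h₁).not_gt h₃
end

section
/- In the grid graph Γ_G associated to a unit interval order U with n elements, for positive integers i and j, the sum of weights e((i,1), (i+j, n+1)) over all directed paths from vertex (i,1) to vertex (i+j, n+1) equals the elementary G-symmetric polynomial e_j^G, where G = inc(U). -/
/-! Write `E c m` for the sum of `x_S` over the `m`-element chains `S` of `U` inside the
columns `c, …, n-1`. Splitting by whether `c ∈ S` gives
`E c (m+1) = E (c+1) (m+1) + x_c * E (next c) m`, because the elements above `c` that are
comparable with `c` are exactly those from `next c` on. The path sums from `(i, c)` to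
`(i + j, n)` satisfy the same recursion (the first step goes right, or diagonally with
weight `x_c`) with the same boundary values, so they equal `E c j`; `c = 0` is the theorem. -/

open scoped Classical

/-- For a unit interval order given by `v 0 < v 1 < ⋯ < v (n-1)` (0-based
indices), `nxt n v i` is the least index `j < n` with `v j ≻ v i`
(i.e. `v i + 1 ≤ v j`), or `n` if there is no such index.  (This is the
paper's `next`, with all indices shifted down by 1.) -/
noncomputable def nxt (n : ℕ) (v : ℕ → ℝ) (i : ℕ) : ℕ :=
  sInf {j : ℕ | (j < n ∧ v i + 1 ≤ v j) ∨ j = n}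

/-- The generating function of directed paths in the grid `Γ_G` of a unit
interval order, computed by the transfer recursion: from a vertex `(i, j)` with
`j < n` there is an edge of weight `1` to `(i, j+1)` and an edge of weight
`v_j` (the variable `X j`) to `(i+1, nxt j)`.  `pathSum n v f a b` is the sum
of the weights of all directed paths from `a` to `b` using at most `f` steps
(rows are 0-based: row `n` here corresponds to row `n+1` of the paper). -/
noncomputable def pathSum (n : ℕ) (v : ℕ → ℝ) : ℕ → ℕ × ℕ → ℕ × ℕ → MvPolynomial ℕ ℤ
  | 0, a, b => if a = b then 1 else 0
  | (f + 1), a, b =>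
    if a = b then 1
    else if a.2 < n then
      pathSum n v f (a.1, a.2 + 1) b +
        MvPolynomial.X a.2 * pathSum n v f (a.1 + 1, nxt n v a.2) b
    else 0

/-- The `m`-th elementary `G`-symmetric polynomial for `G = inc(U)`,
`U = {v 0, ..., v (n-1)}`: the sum over `m`-element stable sets of the
incomparability graph (i.e. sets of indices whose values are pairwise at
distance `≥ 1`, i.e. chains of `U`) of the products of the corresponding
variables. -/
noncomputable def eGU (n : ℕ) (v : ℕ → ℝ) (m : ℕ) : MvPolynomial ℕ ℤ :=
  ∑ S ∈ ((Finset.range n).powersetCard m).filter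
      (fun S => ∀ a ∈ S, ∀ b ∈ S, a ≠ b → 1 ≤ |v a - v b|),
    ∏ i ∈ S, MvPolynomial.X i

open Finset

section Next

variable {n : ℕ} {v : ℕ → ℝ} {c x : ℕ}

lemma nxt_le : nxt n v c ≤ n :=
  Nat.sInf_le (Or.inr rfl)

lemma nxt_le_iff (hv : StrictMonoOn v (Set.Iio n)) (hx : x < n) :
    nxt n v c ≤ x ↔ v c + 1 ≤ v x := by
  refine ⟨fun h => ?_, fun h => Nat.sInf_le (Or.inl ⟨hx, h⟩)⟩
  rcases Nat.sInf_mem (⟨n, Or.inr rfl⟩ : ∃ j, (j < n ∧ v c + 1 ≤ v j) ∨ j = n) with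
    ⟨hlt, hle⟩ | heq
  · exact hle.trans (hv.monotoneOn hlt hx h)
  · exact absurd (heq ▸ h : n ≤ x) hx.not_ge

lemma lt_nxt (hv : StrictMonoOn v (Set.Iio n)) (hc : c < n) : c < nxt n v c :=
  not_le.mp fun h => by linarith [(nxt_le_iff hv hc).mp h]

lemma mem_Ico_nxt_iff (hv : StrictMonoOn v (Set.Iio n)) (hc : c < n) :
    x ∈ Ico (nxt n v c) n ↔ x ∈ Ico c n ∧ 1 ≤ |v c - v x| := by
  simp only [mem_Ico]
  constructor
  · rintro ⟨hnx, hx⟩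
    have hcx : v c + 1 ≤ v x := (nxt_le_iff hv hx).mp hnx
    refine ⟨⟨(lt_nxt hv hc).le.trans hnx, hx⟩, ?_⟩
    rw [abs_sub_comm, abs_of_nonneg (by linarith)]
    linarith
  · rintro ⟨⟨hcx, hx⟩, h⟩
    rw [abs_sub_comm, abs_of_nonneg (sub_nonneg.mpr (hv.monotoneOn hc hx hcx))] at h
    exact ⟨(nxt_le_iff hv hx).mpr (by linarith), hx⟩

end Next

noncomputable def chainsFrom (n : ℕ) (v : ℕ → ℝ) (c m : ℕ) : Finset (Finset ℕ) :=
  ((Ico c n).powersetCard m).filter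
    (fun S => ∀ a ∈ S, ∀ b ∈ S, a ≠ b → 1 ≤ |v a - v b|)

noncomputable def eGUFrom (n : ℕ) (v : ℕ → ℝ) (c m : ℕ) : MvPolynomial ℕ ℤ :=
  ∑ S ∈ chainsFrom n v c m, ∏ i ∈ S, MvPolynomial.X i

section Chains

variable {n : ℕ} {v : ℕ → ℝ} {c m : ℕ}

lemma filter_notMem_chainsFrom :
    (chainsFrom n v c m).filter (c ∉ ·) = chainsFrom n v (c + 1) m := by
  ext S
  simp only [chainsFrom, mem_filter, mem_powersetCard, subset_iff, mem_Ico]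
  constructor
  · rintro ⟨⟨⟨hS, hcard⟩, hsep⟩, hcS⟩
    refine ⟨⟨fun x hx => ?_, hcard⟩, hsep⟩
    have := hS hx
    have := ne_of_mem_of_not_mem hx hcS
    omega
  · rintro ⟨⟨hS, hcard⟩, hsep⟩
    refine ⟨⟨⟨fun x hx => ?_, hcard⟩, hsep⟩, fun hc => ?_⟩ <;>
    · have := hS ‹_›
      omega

lemma notMem_of_mem_chainsFrom_nxt (hv : StrictMonoOn v (Set.Iio n)) (hc : c < n)
    {T : Finset ℕ} (hT : T ∈ chainsFrom n v (nxt n v c) m) : c ∉ T := fun hcT => by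
  have := mem_Ico.mp ((mem_powersetCard.mp (mem_filter.mp hT).1).1 hcT)
  have := lt_nxt hv hc
  omega

lemma insert_mem_chainsFrom_iff (hv : StrictMonoOn v (Set.Iio n)) (hc : c < n)
    {T : Finset ℕ} (hcT : c ∉ T) :
    insert c T ∈ chainsFrom n v c (m + 1) ↔ T ∈ chainsFrom n v (nxt n v c) m := by
  have hsub : T ⊆ Ico (nxt n v c) n ↔ T ⊆ Ico c n ∧ ∀ x ∈ T, 1 ≤ |v c - v x| := by
    simp only [subset_iff, mem_Ico_nxt_iff hv hc, ← forall_and]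
  have hsep : (∀ a ∈ insert c T, ∀ b ∈ insert c T, a ≠ b → 1 ≤ |v a - v b|) ↔
        (∀ a ∈ T, ∀ b ∈ T, a ≠ b → 1 ≤ |v a - v b|) ∧ ∀ x ∈ T, 1 ≤ |v c - v x| := by
    have := Set.pairwise_insert (r := fun a b => 1 ≤ |v a - v b|) (a := c) (s := (T : Set ℕ))
    rw [← coe_insert] at this
    refine this.trans (and_congr Iff.rfl (forall₂_congr fun x hx => ?_))
    rw [abs_sub_comm (v x), and_self, imp_iff_right (ne_of_mem_of_not_mem hx hcT).symm]
  simp only [chainsFrom, mem_filter, mem_powersetCard, insert_subset_iff, card_insert_of_notMem hcT,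
    hsub, hsep, left_mem_Ico.mpr hc, true_and, Nat.add_right_cancel_iff]
  tauto

lemma filter_mem_chainsFrom (hv : StrictMonoOn v (Set.Iio n)) (hc : c < n) :
    (chainsFrom n v c (m + 1)).filter (c ∈ ·) =
      (chainsFrom n v (nxt n v c) m).image (insert c) := by
  ext S
  simp only [mem_filter, mem_image]
  constructor
  · rintro ⟨hS, hcS⟩
    refine ⟨S.erase c, ?_, insert_erase hcS⟩
    rwa [← insert_mem_chainsFrom_iff hv hc (notMem_erase c S), insert_erase hcS]
  · rintro ⟨T, hT, rfl⟩
    exact ⟨(insert_mem_chainsFrom_iff hv hc (notMem_of_mem_chainsFrom_nxt hv hc hT)).mpr hT,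
      mem_insert_self c T⟩

lemma eGUFrom_succ (hv : StrictMonoOn v (Set.Iio n)) (hc : c < n) :
    eGUFrom n v c (m + 1) =
      eGUFrom n v (c + 1) (m + 1) + MvPolynomial.X c * eGUFrom n v (nxt n v c) m := by
  have hcT {T} (hT : T ∈ chainsFrom n v (nxt n v c) m) := notMem_of_mem_chainsFrom_nxt hv hc hT
  unfold eGUFrom
  rw [← sum_filter_add_sum_filter_not _ (c ∈ ·), filter_notMem_chainsFrom,
    filter_mem_chainsFrom hv hc, add_comm, mul_sum, sum_image]
  · exact congrArg _ (sum_congr rfl fun T hT => prod_insert (hcT hT))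
  · intro S hS T hT hST
    simpa only [erase_insert (hcT hS), erase_insert (hcT hT)] using congrArg (erase · c) hST

lemma eGUFrom_zero : eGUFrom n v c 0 = 1 := by
  simp [eGUFrom, chainsFrom, filter_singleton]

lemma eGUFrom_self : eGUFrom n v n m = if m = 0 then 1 else 0 := by
  cases m with
  | zero => exact eGUFrom_zero
  | succ m =>
    rw [eGUFrom, chainsFrom, Ico_self, powersetCard_eq_empty.mpr (by simp)]
    simp

lemma eGU_eq_eGUFrom_zero : eGU n v m = eGUFrom n v 0 m := by
  rw [eGU, eGUFrom, chainsFrom, range_eq_Ico]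
  convert rfl

end Chains

section PathSum

variable {n : ℕ} {v : ℕ → ℝ}

lemma pathSum_eq_zero_of_fst_lt (f : ℕ) {a b : ℕ × ℕ} (h : b.1 < a.1) :
    pathSum n v f a b = 0 := by
  induction f generalizing a with
  | zero => simp [pathSum, ne_of_apply_ne Prod.fst h.ne']
  | succ f ih =>
    rw [pathSum, if_neg (ne_of_apply_ne Prod.fst h.ne')]
    split_ifs <;> simp [ih, h, Nat.lt_succ_of_lt h]

lemma pathSum_of_le_snd (f : ℕ) {a b : ℕ × ℕ} (h : n ≤ a.2) :
    pathSum n v f a b = if a = b then 1 else 0 := by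
  cases f <;> simp [pathSum, h.not_gt]

lemma pathSum_last_col (f i j : ℕ) : pathSum n v f (i, n) (i + j, n) = eGUFrom n v n j := by
  simp [pathSum_of_le_snd f (a := (i, n)) le_rfl, eGUFrom_self]

lemma pathSum_eq_eGUFrom (hv : StrictMonoOn v (Set.Iio n)) (f : ℕ) {c : ℕ} (hc : c ≤ n)
    (hf : n - c ≤ f) (i j : ℕ) : pathSum n v f (i, c) (i + j, n) = eGUFrom n v c j := by
  induction f generalizing c i j with
  | zero =>
    obtain rfl : c = n := by omega
    exact pathSum_last_col 0 i j
  | succ f ih =>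
    rcases hc.eq_or_lt with rfl | hc
    · exact pathSum_last_col _ i j
    rw [pathSum, if_neg (by simp; omega), if_pos hc, ih hc (by omega)]
    dsimp only
    cases j with
    | zero => simp [pathSum_eq_zero_of_fst_lt, eGUFrom_zero]
    | succ j =>
      rw [eGUFrom_succ hv hc, ← ih (nxt_le (v := v) (c := c)) (by have := lt_nxt hv hc; omega),
        add_right_comm i 1 j, ← add_assoc]

end PathSum

/-- in the grid `Γ_G` of an `n`-element unit interval order, the
sum of weights of all directed paths from `(i, 1)` to `(i + j, n + 1)` equals
`e_j^G` (here written 0-based: from `(i, 0)` to `(i + j, n)`; every path has at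
most `n` steps, so fuel `n` enumerates all of them). -/
theorem stmt6 (n : ℕ) (v : ℕ → ℝ)
    (hv : ∀ a b : ℕ, a < b → b < n → v a < v b) (i j : ℕ) :
    pathSum n v n (i, 0) (i + j, n) = eGU n v j := by
  have hv' : StrictMonoOn v (Set.Iio n) := fun a _ b hb hab => hv a b hab hb
  rw [pathSum_eq_eGUFrom hv' n n.zero_le (by omega), eGU_eq_eGUFrom_zero]
end

section
/- Lindström–Gessel–Viennot lemma: Let Γ be a finite directed acyclic graph with edge weights in a commutative ring R, and let A = (a_1,...,a_n), B = (b_1,...,b_n) be tuples of vertices. Let e(a,b) be the sum over directed paths from a to b of the product of edge weights. Then det(e(a_i, b_j))_{i,j=1}^n = Σ over vertex-disjoint path systems (ρ_1,...,ρ_n), where ρ_i goes from a_i to b_{σ(i)} for some permutation σ, of sign(σ)·∏_i w(ρ_i). -/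
/-!
Expanding the determinant by the Leibniz formula, and each entry as a sum over paths, writes it
as the sum of `sign σ · ∏ w(ρ i)` over all multipaths `(σ, ρ)`. The intersecting multipaths cancel
in pairs: take the first index `i` whose path meets another path, the first vertex `v` of `ρ i`
lying on another path, and the first index `j ≠ i` with `v ∈ ρ j`, and exchange the tails of
`ρ i` and `ρ j` after `v`. This keeps the total weight, replaces `σ` by `σ * swap i j`, and, since
paths in an acyclic graph are simple, leaves the triple `(i, v, j)` unchanged, so it is a
sign-reversing involution.
-/

/-- The weight of a directed path, given as its list of vertices: the product
of the weights of its edges. -/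
def pathWeight {V R : Type*} [CommRing R] (wt : V → V → R) (l : List V) : R :=
  ((l.zip l.tail).map fun p => wt p.1 p.2).prod

open Finset Equiv

theorem List.find?_eq_some_of_imp {α : Type*} {p q : α → Prop} [DecidablePred p]
    [DecidablePred q] {l : List α} {b : α} (h : l.find? (fun x => p x) = some b) (hb : q b)
    (hqp : ∀ a ∈ l, q a → p a) : l.find? (fun x => q x) = some b := by
  obtain ⟨-, as, bs, rfl, has⟩ := List.find?_eq_some_iff_append.1 h
  refine List.find?_eq_some_iff_append.2 ⟨by simpa using hb, as, bs, rfl, fun a ha => ?_⟩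
  have := has a ha
  simp only [Bool.not_eq_eq_eq_not, Bool.not_true, decide_eq_false_iff_not] at this ⊢
  exact fun hq => this (hqp a (by simp [ha]) hq)

theorem List.exists_find?_eq_some {α : Type*} {p : α → Prop} [DecidablePred p] {l : List α}
    {x : α} (hx : x ∈ l) (hp : p x) : ∃ b, l.find? (fun y => p y) = some b ∧ p b := by
  obtain ⟨b, hb⟩ := Option.isSome_iff_exists.1
    ((List.find?_isSome (p := fun y => decide (p y))).2 ⟨x, hx, decide_eq_true hp⟩)
  exact ⟨b, hb, by simpa using List.find?_some hb⟩

theorem List.takeWhile_dropWhile {α : Type*} (p : α → Bool) (l : List α) :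
    (l.dropWhile p).takeWhile p = [] := by
  induction l with
  | nil => rfl
  | cons x l ih => by_cases hx : p x <;> simp [hx, ih]

theorem List.IsChain.nodup_of_acyclic {α : Type*} {E : α → α → Prop}
    (hacyc : ∀ x, ¬ Relation.TransGen E x x) {l : List α} (h : l.IsChain E) : l.Nodup :=
  (List.isChain_iff_pairwise.1 (h.imp fun _ _ => Relation.TransGen.single)).imp
    fun {x y} (hxy : Relation.TransGen E x y) (hxy' : x = y) => hacyc y (hxy' ▸ hxy)

theorem Equiv.swap_apply_eq_self_or {α : Type*} [DecidableEq α] {p : α → Prop} {i j : α}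
    (hi : p i) (hj : p j) (k : α) : swap i j k = k ∨ p k ∧ p (swap i j k) := by
  rcases eq_or_ne k i with rfl | hki
  · exact .inr ⟨hi, by rwa [swap_apply_left]⟩
  rcases eq_or_ne k j with rfl | hkj
  · exact .inr ⟨hj, by rwa [swap_apply_right]⟩
  exact .inl (swap_apply_of_ne_of_ne hki hkj)

theorem pathWeight_append_cons {V R : Type*} [CommRing R] (wt : V → V → R) (A : List V) (v : V)
    (B : List V) :
    pathWeight wt (A ++ v :: B) = pathWeight wt (A ++ [v]) * pathWeight wt (v :: B) := by
  induction A with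
  | nil => simp [pathWeight]
  | cons x A ih => cases A <;> simp_all [pathWeight, mul_assoc]

namespace LGV

section Splice

variable {V : Type*} [DecidableEq V]

def spliceAt (v : V) (l₁ l₂ : List V) : List V :=
  l₁.takeWhile (· ≠ v) ++ l₂.dropWhile (· ≠ v)

theorem spliceAt_self (v : V) (l : List V) : spliceAt v l l = l :=
  List.takeWhile_append_dropWhile

theorem spliceAt_spliceAt (v : V) (l₁ l₂ : List V) :
    spliceAt v (spliceAt v l₁ l₂) (spliceAt v l₂ l₁) = l₁ := by
  rw [spliceAt, spliceAt, spliceAt,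
    List.takeWhile_append_of_pos fun _ => List.mem_takeWhile_imp, List.takeWhile_dropWhile,
    List.dropWhile_append_of_pos fun _ => List.mem_takeWhile_imp, List.dropWhile_idempotent,
    List.append_nil, List.takeWhile_append_dropWhile]

theorem mem_or_mem_of_mem_spliceAt {v x : V} {l₁ l₂ : List V} (h : x ∈ spliceAt v l₁ l₂) :
    x ∈ l₁ ∨ x ∈ l₂ :=
  (List.mem_append.1 h).imp (fun h => (List.takeWhile_sublist _).subset h)
    fun h => (List.dropWhile_sublist _).subset h

theorem spliceAt_append_cons {v : V} {A₁ A₂ : List V} (hA₁ : v ∉ A₁) (hA₂ : v ∉ A₂)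
    (B₁ B₂ : List V) : spliceAt v (A₁ ++ v :: B₁) (A₂ ++ v :: B₂) = A₁ ++ v :: B₂ := by
  have hne : ∀ A : List V, v ∉ A → ∀ a ∈ A, decide (a ≠ v) = true :=
    fun A hA a ha => decide_eq_true (ne_of_mem_of_not_mem ha hA)
  rw [spliceAt, List.takeWhile_append_of_pos (hne A₁ hA₁),
    List.dropWhile_append_of_pos (hne A₂ hA₂)]
  simp

theorem exists_spliceAt_eq {v : V} {l₁ l₂ : List V} (h₁ : v ∈ l₁) (h₂ : v ∈ l₂) :
    ∃ A₁ B₁ A₂ B₂, l₁ = A₁ ++ v :: B₁ ∧ l₂ = A₂ ++ v :: B₂ ∧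
      spliceAt v l₁ l₂ = A₁ ++ v :: B₂ ∧ spliceAt v l₂ l₁ = A₂ ++ v :: B₁ := by
  obtain ⟨A₁, B₁, rfl, hA₁⟩ := List.eq_append_cons_of_mem h₁
  obtain ⟨A₂, B₂, rfl, hA₂⟩ := List.eq_append_cons_of_mem h₂
  exact ⟨A₁, B₁, A₂, B₂, rfl, rfl, spliceAt_append_cons hA₁ hA₂ _ _,
    spliceAt_append_cons hA₂ hA₁ _ _⟩

theorem head?_spliceAt {v : V} {l₁ l₂ : List V} (h₁ : v ∈ l₁) (h₂ : v ∈ l₂) :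
    (spliceAt v l₁ l₂).head? = l₁.head? := by
  obtain ⟨A₁, B₁, A₂, B₂, rfl, -, h, -⟩ := exists_spliceAt_eq h₁ h₂
  rw [h]
  cases A₁ <;> rfl

theorem getLast?_spliceAt {v : V} {l₁ l₂ : List V} (h₁ : v ∈ l₁) (h₂ : v ∈ l₂) :
    (spliceAt v l₁ l₂).getLast? = l₂.getLast? := by
  obtain ⟨A₁, B₁, A₂, B₂, -, rfl, h, -⟩ := exists_spliceAt_eq h₁ h₂
  rw [h, List.getLast?_append_cons, List.getLast?_append_cons]

theorem isChain_spliceAt {E : V → V → Prop} {v : V} {l₁ l₂ : List V} (h₁ : v ∈ l₁)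
    (h₂ : v ∈ l₂) (hc₁ : l₁.IsChain E) (hc₂ : l₂.IsChain E) : (spliceAt v l₁ l₂).IsChain E := by
  obtain ⟨A₁, B₁, A₂, B₂, rfl, rfl, h, -⟩ := exists_spliceAt_eq h₁ h₂
  rw [h, List.isChain_split]
  exact ⟨(List.isChain_split.1 hc₁).1, (List.isChain_split.1 hc₂).2⟩

theorem pathWeight_spliceAt_mul {R : Type*} [CommRing R] (wt : V → V → R) {v : V}
    {l₁ l₂ : List V} (h₁ : v ∈ l₁) (h₂ : v ∈ l₂) :
    pathWeight wt (spliceAt v l₁ l₂) * pathWeight wt (spliceAt v l₂ l₁) =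
      pathWeight wt l₁ * pathWeight wt l₂ := by
  obtain ⟨A₁, B₁, A₂, B₂, rfl, rfl, h, h'⟩ := exists_spliceAt_eq h₁ h₂
  rw [h, h', pathWeight_append_cons wt A₁ v B₁, pathWeight_append_cons wt A₂ v B₂,
    pathWeight_append_cons wt A₁ v B₂, pathWeight_append_cons wt A₂ v B₁]
  ring

end Splice

section SwapTails

variable {ι V : Type*} [DecidableEq ι] [DecidableEq V]

def swapTails (ρ : ι → List V) (i j : ι) (v : V) (k : ι) : List V :=
  spliceAt v (ρ k) (ρ (swap i j k))

variable {ρ : ι → List V} {i j : ι} {v : V}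

theorem swapTails_of_ne {k : ι} (hki : k ≠ i) (hkj : k ≠ j) : swapTails ρ i j v k = ρ k := by
  rw [swapTails, swap_apply_of_ne_of_ne hki hkj, spliceAt_self]

theorem swapTails_swapTails : swapTails (swapTails ρ i j v) i j v = ρ := by
  funext k
  rw [swapTails, swapTails, swapTails, swap_apply_self, spliceAt_spliceAt]

theorem mem_or_mem_of_mem_swapTails {k : ι} {x : V} (h : x ∈ swapTails ρ i j v k) :
    x ∈ ρ k ∨ x ∈ ρ (swap i j k) :=
  mem_or_mem_of_mem_spliceAt h

theorem head?_swapTails (hi : v ∈ ρ i) (hj : v ∈ ρ j) (k : ι) :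
    (swapTails ρ i j v k).head? = (ρ k).head? := by
  rcases swap_apply_eq_self_or (p := fun k => v ∈ ρ k) hi hj k with hk | ⟨hk, hk'⟩
  · rw [swapTails, hk, spliceAt_self]
  · exact head?_spliceAt hk hk'

theorem getLast?_swapTails (hi : v ∈ ρ i) (hj : v ∈ ρ j) (k : ι) :
    (swapTails ρ i j v k).getLast? = (ρ (swap i j k)).getLast? := by
  rcases swap_apply_eq_self_or (p := fun k => v ∈ ρ k) hi hj k with hk | ⟨hk, hk'⟩
  · rw [swapTails, hk, spliceAt_self]
  · exact getLast?_spliceAt hk hk'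

theorem isChain_swapTails {E : V → V → Prop} (hi : v ∈ ρ i) (hj : v ∈ ρ j)
    (hρ : ∀ k, (ρ k).IsChain E) (k : ι) : (swapTails ρ i j v k).IsChain E := by
  rcases swap_apply_eq_self_or (p := fun k => v ∈ ρ k) hi hj k with hk | ⟨hk, hk'⟩
  · rw [swapTails, hk, spliceAt_self]
    exact hρ k
  · exact isChain_spliceAt hk hk' (hρ _) (hρ _)

theorem prod_pathWeight_swapTails [Fintype ι] {R : Type*} [CommRing R] (wt : V → V → R)
    (hij : i ≠ j) (hi : v ∈ ρ i) (hj : v ∈ ρ j) :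
    ∏ k, pathWeight wt (swapTails ρ i j v k) = ∏ k, pathWeight wt (ρ k) := by
  rw [← prod_compl_mul_prod {i, j}, ← prod_compl_mul_prod {i, j} (fun k => pathWeight wt (ρ k)),
    prod_pair hij, prod_pair hij]
  congr 1
  · refine prod_congr rfl fun k hk => ?_
    simp only [mem_compl, mem_insert, mem_singleton, not_or] at hk
    rw [swapTails_of_ne hk.1 hk.2]
  · rw [swapTails, swapTails, swap_apply_left, swap_apply_right]
    exact pathWeight_spliceAt_mul wt hi hj

end SwapTails

section Crossing

variable {ι V : Type*}

def OnOtherPath (ρ : ι → List V) (i : ι) (x : V) : Prop := ∃ k, k ≠ i ∧ x ∈ ρ k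

def Crosses (ρ : ι → List V) (i : ι) : Prop := ∃ x ∈ ρ i, OnOtherPath ρ i x

variable [DecidableEq ι] [DecidableEq V] {ρ : ι → List V} {i j : ι} {v : V}

theorem crosses_of_crosses_swapTails (hij : i ≠ j) (hi : v ∈ ρ i) (hj : v ∈ ρ j) {k : ι}
    (h : Crosses (swapTails ρ i j v) k) : Crosses ρ k := by
  rcases eq_or_ne k i with rfl | hki
  · exact ⟨v, hi, j, hij.symm, hj⟩
  rcases eq_or_ne k j with rfl | hkj
  · exact ⟨v, hj, i, hij, hi⟩
  obtain ⟨x, hx, m, hmk, hxm⟩ := h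
  rw [swapTails_of_ne hki hkj] at hx
  have hswap : swap i j m ≠ k := by
    rw [← swap_apply_of_ne_of_ne hki hkj]
    exact (swap i j).injective.ne hmk
  rcases mem_or_mem_of_mem_swapTails hxm with hxm | hxm
  · exact ⟨x, hx, m, hmk, hxm⟩
  · exact ⟨x, hx, _, hswap, hxm⟩

variable [Fintype ι]

instance (ρ : ι → List V) (i : ι) : DecidablePred (OnOtherPath ρ i) :=
  fun _ => inferInstanceAs (Decidable (∃ _, _))

instance (ρ : ι → List V) : DecidablePred (Crosses ρ) :=
  fun _ => inferInstanceAs (Decidable (∃ _ ∈ _, _))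

noncomputable def firstCrossing (ρ : ι → List V) : Option (ι × V × ι) :=
  (univ.toList.find? fun i => Crosses ρ i).bind fun i =>
    ((ρ i).find? fun x => OnOtherPath ρ i x).bind fun v =>
      (univ.toList.find? fun k => k ≠ i ∧ v ∈ ρ k).map fun j => (i, v, j)

theorem firstCrossing_eq_some_iff :
    firstCrossing ρ = some (i, v, j) ↔
      univ.toList.find? (fun k => Crosses ρ k) = some i ∧
      (ρ i).find? (fun x => OnOtherPath ρ i x) = some v ∧
      univ.toList.find? (fun k => k ≠ i ∧ v ∈ ρ k) = some j := by
  simp [firstCrossing, Option.bind_eq_some_iff]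

theorem firstCrossing_eq_none_iff :
    firstCrossing ρ = none ↔ ∀ i j, i ≠ j → ∀ x ∈ ρ i, x ∉ ρ j := by
  have hdisj : (∀ i j, i ≠ j → ∀ x ∈ ρ i, x ∉ ρ j) ↔ ∀ i, ¬ Crosses ρ i := by
    simp only [Crosses, OnOtherPath]
    exact ⟨fun h i ⟨x, hx, k, hki, hxk⟩ => h i k hki.symm x hx hxk,
      fun h i j hij x hx hxj => h i ⟨x, hx, j, hij.symm, hxj⟩⟩
  rw [hdisj]
  constructor
  · intro h i hi
    obtain ⟨i₀, hi₀, x, hx, hox⟩ := List.exists_find?_eq_some (mem_toList.2 (mem_univ i)) hi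
    obtain ⟨v, hv, k, hki, hvk⟩ := List.exists_find?_eq_some hx hox
    obtain ⟨j, hj, -⟩ := List.exists_find?_eq_some (p := fun k => k ≠ i₀ ∧ v ∈ ρ k)
      (mem_toList.2 (mem_univ k)) ⟨hki, hvk⟩
    simpa [h] using firstCrossing_eq_some_iff.2 ⟨hi₀, hv, hj⟩
  · intro h
    have hnone : univ.toList.find? (fun i => Crosses ρ i) = none :=
      List.find?_eq_none.2 fun i _ => by simpa using h i
    simp only [firstCrossing, hnone, Option.bind_none]

theorem ne_and_mem_of_firstCrossing_eq_some (h : firstCrossing ρ = some (i, v, j)) :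
    i ≠ j ∧ v ∈ ρ i ∧ v ∈ ρ j := by
  obtain ⟨-, hv, hj⟩ := firstCrossing_eq_some_iff.1 h
  obtain ⟨hji, hvj⟩ : j ≠ i ∧ v ∈ ρ j := by simpa using List.find?_some hj
  exact ⟨hji.symm, List.mem_of_find?_eq_some hv, hvj⟩

theorem firstCrossing_swapTails (h : firstCrossing ρ = some (i, v, j)) (hnd : (ρ i).Nodup) :
    firstCrossing (swapTails ρ i j v) = some (i, v, j) := by
  obtain ⟨hi₀, hv, hj₀⟩ := firstCrossing_eq_some_iff.1 h
  obtain ⟨hij, hvi, hvj⟩ := ne_and_mem_of_firstCrossing_eq_some h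
  obtain ⟨hov, A, B, hρi, hA⟩ := List.find?_eq_some_iff_append.1 hv
  replace hov : OnOtherPath ρ i v := by simpa using hov
  replace hA : ∀ a ∈ A, ¬ OnOtherPath ρ i a := by simpa using hA
  have hvA : v ∉ A := fun hvA => hA v hvA hov
  obtain ⟨Aj, Bj, hρj, hvAj⟩ := List.eq_append_cons_of_mem hvj
  have hρ'i : swapTails ρ i j v i = A ++ v :: Bj := by
    rw [swapTails, swap_apply_left, hρi, hρj, spliceAt_append_cons hvA hvAj]
  have hρ'j : swapTails ρ i j v j = Aj ++ v :: B := by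
    rw [swapTails, swap_apply_right, hρi, hρj, spliceAt_append_cons hvAj hvA]
  have hv'i : v ∈ swapTails ρ i j v i := by simp [hρ'i]
  have hv'j : v ∈ swapTails ρ i j v j := by simp [hρ'j]
  refine firstCrossing_eq_some_iff.2 ⟨?_, ?_, ?_⟩
  · exact List.find?_eq_some_of_imp hi₀ ⟨v, hv'i, j, hij.symm, hv'j⟩
      fun k _ => crosses_of_crosses_swapTails hij hvi hvj
  · rw [hρ'i]
    refine List.find?_eq_some_iff_append.2 ⟨by simpa using ⟨j, hij.symm, hv'j⟩, A, Bj, rfl, ?_⟩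
    simp only [Bool.not_eq_eq_eq_not, Bool.not_true, decide_eq_false_iff_not]
    rintro a ha ⟨m, hmi, ham⟩
    rcases eq_or_ne m j with rfl | hmj
    · rw [hρ'j] at ham
      rcases List.mem_append.1 ham with ham | ham
      · exact hA a ha ⟨m, hmi, by rw [hρj]; simp [ham]⟩
      · -- a vertex before `v` on the simple path `ρ i` does not reappear after `v`
        rw [hρi] at hnd
        exact List.disjoint_of_nodup_append hnd ha ham
    · rw [swapTails_of_ne hmi hmj] at ham
      exact hA a ha ⟨m, hmi, ham⟩
  · refine List.find?_eq_some_of_imp hj₀ ⟨hij.symm, hv'j⟩ fun k _ ⟨hki, hvk⟩ => ⟨hki, ?_⟩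
    rcases eq_or_ne k j with rfl | hkj
    · exact hvj
    · rwa [swapTails_of_ne hki hkj] at hvk

end Crossing

section Expansion

variable {ι α : Type*} [Fintype ι] [DecidableEq ι]

def multipaths (P : ι → ι → Finset α) : Finset (Perm ι × (ι → α)) :=
  (univ.sigma fun σ => Fintype.piFinset fun i => P i (σ i)).map (sigmaEquivProd _ _).toEmbedding

theorem mem_multipaths {P : ι → ι → Finset α} {s : Perm ι × (ι → α)} :
    s ∈ multipaths P ↔ ∀ i, s.2 i ∈ P i (s.1 i) := by
  simp [multipaths, mem_map_equiv]

theorem det_of_sum_eq_sum_multipaths {R : Type*} [CommRing R] (P : ι → ι → Finset α)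
    (f : α → R) :
    (Matrix.of fun i j => ∑ l ∈ P i j, f l).det =
      ∑ s ∈ multipaths P, (Perm.sign s.1 : ℤ) • ∏ i, f (s.2 i) := by
  rw [← Matrix.det_transpose, Matrix.det_apply, multipaths, sum_map, sum_sigma]
  refine sum_congr rfl fun σ _ => ?_
  simp only [Matrix.transpose_apply, Matrix.of_apply, prod_univ_sum, Units.smul_def, smul_sum]
  rfl

end Expansion

section Cancellation

variable {ι V : Type*} [Fintype ι] [DecidableEq ι] [DecidableEq V] {i j : ι} {v : V}

noncomputable def tailSwap (s : Perm ι × (ι → List V)) : Perm ι × (ι → List V) :=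
  match firstCrossing s.2 with
  | some (i, v, j) => (s.1 * swap i j, swapTails s.2 i j v)
  | none => s

theorem tailSwap_of_firstCrossing_eq_some {s : Perm ι × (ι → List V)}
    (h : firstCrossing s.2 = some (i, v, j)) :
    tailSwap s = (s.1 * swap i j, swapTails s.2 i j v) := by
  simp [tailSwap, h]

theorem tailSwap_tailSwap {s : Perm ι × (ι → List V)} (h : firstCrossing s.2 = some (i, v, j))
    (hnd : (s.2 i).Nodup) : tailSwap (tailSwap s) = s := by
  rw [tailSwap_of_firstCrossing_eq_some h,
    tailSwap_of_firstCrossing_eq_some (firstCrossing_swapTails h hnd), mul_assoc, swap_mul_self,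
    mul_one, swapTails_swapTails]

variable {E : V → V → Prop} {paths : V → V → Finset (List V)} {a b : ι → V}

theorem tailSwap_mem_multipaths
    (hpaths : ∀ x y (l : List V), l ∈ paths x y ↔
      (l.head? = some x ∧ l.getLast? = some y ∧ l.IsChain E)) {s : Perm ι × (ι → List V)}
    (hs : s ∈ multipaths fun i j => paths (a i) (b j)) (h : firstCrossing s.2 = some (i, v, j)) :
    tailSwap s ∈ multipaths fun i j => paths (a i) (b j) := by
  obtain ⟨-, hvi, hvj⟩ := ne_and_mem_of_firstCrossing_eq_some h
  have hρ k := (hpaths _ _ _).1 (mem_multipaths.1 hs k)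
  rw [tailSwap_of_firstCrossing_eq_some h, mem_multipaths]
  refine fun k => (hpaths _ _ _).2 ⟨?_, ?_, isChain_swapTails hvi hvj (fun k => (hρ k).2.2) k⟩
  · rw [head?_swapTails hvi hvj]
    exact (hρ k).1
  · rw [getLast?_swapTails hvi hvj]
    exact (hρ _).2.1

theorem sum_multipaths_crossing_eq_zero
    (hpaths : ∀ x y (l : List V), l ∈ paths x y ↔
      (l.head? = some x ∧ l.getLast? = some y ∧ l.IsChain E))
    {R : Type*} [CommRing R] (wt : V → V → R) (hacyc : ∀ x : V, ¬ Relation.TransGen E x x) :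
    ∑ s ∈ multipaths (fun i j => paths (a i) (b j)) with firstCrossing s.2 ≠ none,
      (Perm.sign s.1 : ℤ) • ∏ i, pathWeight wt (s.2 i) = 0 := by
  have hcross : ∀ s ∈ (multipaths fun i j => paths (a i) (b j)).filter (firstCrossing ·.2 ≠ none),
      ∃ i v j, firstCrossing s.2 = some (i, v, j) := by
    intro s hs
    obtain ⟨⟨i, v, j⟩, h⟩ := Option.ne_none_iff_exists'.1 (mem_filter.1 hs).2
    exact ⟨i, v, j, h⟩
  have hnodup : ∀ s ∈ multipaths (fun i j => paths (a i) (b j)), ∀ i, (s.2 i).Nodup :=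
    fun s hs i => ((hpaths _ _ _).1 (mem_multipaths.1 hs i)).2.2.nodup_of_acyclic hacyc
  refine sum_involution (fun s _ => tailSwap s) (fun s hs => ?_) (fun s hs _ => ?_)
    (fun s hs => ?_) (fun s hs => ?_) <;> obtain ⟨i, v, j, h⟩ := hcross s hs
  · obtain ⟨hij, hvi, hvj⟩ := ne_and_mem_of_firstCrossing_eq_some h
    rw [tailSwap_of_firstCrossing_eq_some h, prod_pathWeight_swapTails wt hij hvi hvj,
      Perm.sign_mul, Perm.sign_swap hij]
    simp
  · rw [tailSwap_of_firstCrossing_eq_some h, Ne, Prod.ext_iff, mul_eq_left, swap_eq_one_iff]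
    exact fun hij => (ne_and_mem_of_firstCrossing_eq_some h).1 hij.1
  · have hs' := (mem_filter.1 hs).1
    refine mem_filter.2 ⟨tailSwap_mem_multipaths hpaths hs' h, ?_⟩
    rw [tailSwap_of_firstCrossing_eq_some h, firstCrossing_swapTails h (hnodup s hs' i)]
    exact Option.some_ne_none _
  · exact tailSwap_tailSwap h (hnodup s (mem_filter.1 hs).1 i)

end Cancellation

end LGV

theorem stmt7_general {V R : Type*} [DecidableEq V] [CommRing R]
    (E : V → V → Prop) (hacyc : ∀ x : V, ¬ Relation.TransGen E x x)
    (wt : V → V → R) (n : ℕ) (a b : Fin n → V)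
    (paths : V → V → Finset (List V))
    (hpaths : ∀ x y (l : List V), l ∈ paths x y ↔
      (l.head? = some x ∧ l.getLast? = some y ∧ l.Chain' E))
    (sys : Finset (Equiv.Perm (Fin n) × (Fin n → List V)))
    (hsys : ∀ s, s ∈ sys ↔
      ((∀ i, s.2 i ∈ paths (a i) (b (s.1 i))) ∧
       ∀ i j : Fin n, i ≠ j → ∀ x ∈ s.2 i, x ∉ s.2 j)) :
    Matrix.det (Matrix.of fun i j : Fin n => ∑ l ∈ paths (a i) (b j), pathWeight wt l) =
      ∑ s ∈ sys, (Equiv.Perm.sign s.1 : ℤ) • ∏ i : Fin n, pathWeight wt (s.2 i) := by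
  have hsys' : sys = {s ∈ LGV.multipaths fun i j => paths (a i) (b j) |
      LGV.firstCrossing s.2 = none} := by
    ext s
    rw [hsys, mem_filter, LGV.mem_multipaths, LGV.firstCrossing_eq_none_iff]
  rw [LGV.det_of_sum_eq_sum_multipaths (fun i j => paths (a i) (b j)),
    ← sum_filter_not_add_sum_filter _ (fun s => LGV.firstCrossing s.2 = none),
    LGV.sum_multipaths_crossing_eq_zero hpaths wt hacyc, zero_add, hsys']

/-- Lindström–Gessel–Viennot: let `Γ` be a finite directed acyclic
graph with edge relation `E` and edge weights `wt` in a commutative ring, and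
`a, b : Fin n → V` tuples of vertices.  `paths x y` is the (finite) set of all
directed paths from `x` to `y`, and `sys` is the (finite) set of all
non-intersecting multipaths `(σ, ρ)`, i.e. pairwise vertex-disjoint families of
paths `ρ i : a i → b (σ i)`.  Then
`det (e(a_i, b_j)) = Σ_{(σ,ρ) ∈ sys} sign σ · Π_i w(ρ_i)`. -/
theorem stmt7 {V R : Type*} [Fintype V] [DecidableEq V] [CommRing R]
    (E : V → V → Prop) (hacyc : ∀ x : V, ¬ Relation.TransGen E x x)
    (wt : V → V → R) (n : ℕ) (a b : Fin n → V)
    (paths : V → V → Finset (List V))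
    (hpaths : ∀ x y (l : List V), l ∈ paths x y ↔
      (l.head? = some x ∧ l.getLast? = some y ∧ l.Chain' E))
    (sys : Finset (Equiv.Perm (Fin n) × (Fin n → List V)))
    (hsys : ∀ s, s ∈ sys ↔
      ((∀ i, s.2 i ∈ paths (a i) (b (s.1 i))) ∧
       ∀ i j : Fin n, i ≠ j → ∀ x ∈ s.2 i, x ∉ s.2 j)) :
    Matrix.det (Matrix.of fun i j : Fin n => ∑ l ∈ paths (a i) (b j), pathWeight wt l) =
      ∑ s ∈ sys, (Equiv.Perm.sign s.1 : ℤ) • ∏ i : Fin n, pathWeight wt (s.2 i) :=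
  stmt7_general E hacyc wt n a b paths hpaths sys hsys
end

section
/- Stanley's sink theorem: For a finite graph G with X_G = Σ_λ c_λ e_λ, and any j ∈ ℕ, the number of acyclic orientations of G with exactly j sinks equals Σ over partitions λ of length j of c_λ. -/
open scoped Classical

/-- The `m`-th elementary symmetric function in the variables `x_0, x_1, ...`,
as a multivariate power series. -/
noncomputable def eps (m : ℕ) : MvPowerSeries ℕ ℚ :=
  fun d => if d.support.card = m ∧ ∀ i ∈ d.support, d i = 1 then 1 else 0

/-- `e_λ = ∏ e_{λ_i}` for a partition `λ`. -/
noncomputable def epsP {N : ℕ} (P : Nat.Partition N) : MvPowerSeries ℕ ℚ :=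
  (P.parts.map eps).prod

/-- The chromatic symmetric function of a finite graph. -/
noncomputable def XG {V : Type*} [Fintype V] (G : SimpleGraph V) : MvPowerSeries ℕ ℚ :=
  fun d => (Nat.card {c : V → ℕ //
    (∀ u w : V, G.Adj u w → c u ≠ c w) ∧
    ∀ i : ℕ, (Finset.univ.filter fun v => c v = i).card = d i} : ℚ)

/-!
Apply to both sides of `X_G = ∑ c_λ e_λ` the linear functional `sinkFunctional N t`, an alternating
sum over compositions `d` of `N = #V` of the coefficients of `x^d`, weighted by `sinkWeight t d_0`.

The coefficient of `x^d` in `X_G` counts proper colourings with colour classes of sizes `d`.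
Directing every edge towards its smaller colour sorts these colourings by acyclic orientation `o`,
and the colourings inducing `o` are the layerings of `o`: surjections onto `{0, …, k-1}` that
decrease along `o`. The bottom layer of a layering is a nonempty set of sinks, and removing it
leaves a layering of the rest; by induction the alternating sum over the layerings of `o` is
`t ^ #sinks(o)`. So the functional sends `X_G` to `∑_o t ^ #sinks(o)`.

The coefficient of `x^d` in `e_λ` counts tuples of sets `T_i` with `#T_i = λ_i`, which are the
layerings of a disjoint union of transitive tournaments of sizes `λ_i`; it has `ℓ(λ)` sinks, so the
functional sends `e_λ` to `t ^ ℓ(λ)`. Comparing the coefficients of `t ^ j` gives the theorem.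
-/

namespace StanleySink

open Finset

/-- Compositions `(d_0, …, d_{k-1})` of `N` into `k` positive parts, as exponent vectors. -/
noncomputable def compositions (N k : ℕ) : Finset (ℕ →₀ ℕ) :=
  {d ∈ finsuppAntidiag (range k) N | d.support = range k}

/-- The value at `0` only matters for the empty graph; for `Z ≠ ∅` the weight is chosen so that
`∑_{∅ ≠ Z ⊆ M} (-1)^(#Z + 1) * sinkWeight t #Z = t ^ #M` for every nonempty `M`. -/
noncomputable def sinkWeight (t : ℚ) (z : ℕ) : ℚ :=
  if z = 0 then 1 else 1 - (1 - t) ^ z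

noncomputable def sinkFunctional (N : ℕ) (t : ℚ) : MvPowerSeries ℕ ℚ →ₗ[ℚ] ℚ :=
  ∑ k ∈ range (N + 1), ∑ d ∈ compositions N k,
    ((-1) ^ (N + k) * sinkWeight t (d 0)) • MvPowerSeries.coeff d

section ColorCount

variable {V : Type*} [Fintype V]

noncomputable def colorCount (c : V → ℕ) : ℕ →₀ ℕ :=
  Multiset.toFinsupp (univ.val.map c)

lemma colorCount_apply (c : V → ℕ) (j : ℕ) : colorCount c j = #{v | c v = j} := by
  rw [colorCount, Multiset.toFinsupp_apply, Multiset.count_map, card_def, filter_val]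
  simp only [eq_comm]

lemma support_colorCount (c : V → ℕ) : (colorCount c).support = univ.image c := rfl

lemma sum_colorCount (c : V → ℕ) {s : Finset ℕ} (hs : univ.image c ⊆ s) :
    s.sum (colorCount c) = Fintype.card V := by
  simp only [colorCount_apply]
  rw [← card_univ, card_eq_sum_card_fiberwise (fun v _ => hs (mem_image_of_mem c (mem_univ v)))]

lemma colorCount_mem_compositions_iff {c : V → ℕ} {k : ℕ} :
    colorCount c ∈ compositions (Fintype.card V) k ↔ univ.image c = range k := by
  rw [compositions, mem_filter, mem_finsuppAntidiag, support_colorCount]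
  exact ⟨fun h => h.2, fun h => ⟨⟨sum_colorCount c h.le, h.le⟩, h⟩⟩

lemma sinkFunctional_apply_eq_sum_colorings (t : ℚ)
    (F : MvPowerSeries ℕ ℚ) (s : ℕ → Finset (V → ℕ))
    (hs : ∀ k, ∀ c ∈ s k, univ.image c = range k)
    (hF : ∀ k, ∀ d ∈ compositions (Fintype.card V) k,
      MvPowerSeries.coeff d F = #{c ∈ s k | colorCount c = d}) :
    sinkFunctional (Fintype.card V) t F = ∑ k ∈ range (Fintype.card V + 1),
      (-1) ^ (Fintype.card V + k) * ∑ c ∈ s k, sinkWeight t #{v | c v = 0} := by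
  simp only [sinkFunctional, LinearMap.sum_apply, LinearMap.smul_apply, smul_eq_mul]
  refine sum_congr rfl fun k _ => ?_
  rw [← sum_fiberwise_of_maps_to fun c hc => colorCount_mem_compositions_iff.2 (hs k c hc),
    mul_sum]
  refine sum_congr rfl fun d hd => ?_
  rw [hF k d hd, sum_congr rfl fun c hc => by rw [← colorCount_apply, (mem_filter.1 hc).2],
    sum_const, nsmul_eq_mul]
  ring

end ColorCount

section Layering

variable {V : Type*} (r : V → V → Prop)

/-- A layering of `S` into the `k` nonempty layers `b⁻¹(i)`, every `r`-edge inside `S` going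
down; setting `b = 0` off `S` makes `b` unique. -/
structure IsLayering (S : Finset V) (k : ℕ) (b : V → ℕ) : Prop where
  eq_zero_of_notMem : ∀ v ∉ S, b v = 0
  lt : ∀ v ∈ S, b v < k
  exists_eq : ∀ i < k, ∃ v ∈ S, b v = i
  lt_of_rel : ∀ u ∈ S, ∀ w ∈ S, r u w → b w < b u

noncomputable def sinks (S : Finset V) : Finset V := {x ∈ S | ∀ u ∈ S, ¬ r x u}

noncomputable def layerings [Fintype V] (S : Finset V) (k : ℕ) : Finset (V → ℕ) :=
  {b ∈ Fintype.piFinset fun v => if v ∈ S then range k else {0} | IsLayering r S k b}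

variable {r}

lemma mem_sinks {S : Finset V} {x : V} : x ∈ sinks r S ↔ x ∈ S ∧ ∀ u ∈ S, ¬ r x u :=
  mem_filter

lemma sinks_subset (S : Finset V) : sinks r S ⊆ S :=
  filter_subset _ _

namespace IsLayering

variable {S Z : Finset V} {k : ℕ} {b : V → ℕ}

lemma zeroFiber_subset_sinks (hb : IsLayering r S k b) : {v ∈ S | b v = 0} ⊆ sinks r S := by
  intro x hx
  rw [mem_filter] at hx
  refine mem_sinks.2 ⟨hx.1, fun u hu hxu => ?_⟩
  have := hb.lt_of_rel x hx.1 u hu hxu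
  omega

lemma zeroFiber_nonempty (hb : IsLayering r S (k + 1) b) : {v ∈ S | b v = 0}.Nonempty := by
  obtain ⟨v, hv, hbv⟩ := hb.exists_eq 0 k.succ_pos
  exact ⟨v, mem_filter.2 ⟨hv, hbv⟩⟩

lemma pred (hb : IsLayering r S (k + 1) b) (hZ : {v ∈ S | b v = 0} = Z) :
    IsLayering r (S \ Z) k (fun v => b v - 1) := by
  have hpos : ∀ v ∈ S \ Z, b v ≠ 0 := fun v hv h0 => by
    rw [mem_sdiff, ← hZ, mem_filter] at hv
    exact hv.2 ⟨hv.1, h0⟩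
  refine ⟨fun v hv => ?_, fun v hv => ?_, fun i hi => ?_, fun u hu w hw huw => ?_⟩
  · by_cases hvS : v ∈ S
    · have hvZ : v ∈ Z := by by_contra h; exact hv (mem_sdiff.2 ⟨hvS, h⟩)
      rw [← hZ, mem_filter] at hvZ
      simp [hvZ.2]
    · simp [hb.eq_zero_of_notMem v hvS]
  · have := hb.lt v (mem_sdiff.1 hv).1
    have := hpos v hv
    omega
  · obtain ⟨v, hv, hbv⟩ := hb.exists_eq (i + 1) (by omega)
    have hvZ : v ∉ Z := fun h => by
      rw [← hZ, mem_filter] at h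
      omega
    exact ⟨v, mem_sdiff.2 ⟨hv, hvZ⟩, by omega⟩
  · have := hb.lt_of_rel u (mem_sdiff.1 hu).1 w (mem_sdiff.1 hw).1 huw
    have := hpos w hw
    omega

lemma succ (hb : IsLayering r (S \ Z) k b) (hZ : Z ⊆ sinks r S) (hZne : Z.Nonempty) :
    IsLayering r S (k + 1) (fun v => if v ∈ S \ Z then b v + 1 else 0) := by
  have hZS : Z ⊆ S := hZ.trans (sinks_subset S)
  refine ⟨fun v hv => ?_, fun v hv => ?_, fun i hi => ?_, fun u hu w hw huw => ?_⟩
  · simp [hv]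
  · split_ifs with h
    · have := hb.lt v h
      omega
    · omega
  · rcases i with _ | i
    · obtain ⟨z, hz⟩ := hZne
      exact ⟨z, hZS hz, by simp [hz]⟩
    · obtain ⟨v, hv, hbv⟩ := hb.exists_eq i (by omega)
      exact ⟨v, (mem_sdiff.1 hv).1, by simp [hv, hbv]⟩
  · have hu : u ∈ S \ Z := mem_sdiff.2 ⟨hu, fun huZ => (mem_sinks.1 (hZ huZ)).2 w hw huw⟩
    by_cases hw' : w ∈ S \ Z
    · have := hb.lt_of_rel u hu w hw' huw
      simp only [hu, hw', if_true]
      omega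
    · simp [hu, hw']

lemma zeroFiber_succ (hZS : Z ⊆ S) :
    {v ∈ S | (if v ∈ S \ Z then b v + 1 else 0) = 0} = Z := by
  ext v
  by_cases hv : v ∈ Z
  · simp [hv, hZS hv]
  · simp [hv]

end IsLayering

variable [Fintype V]

lemma mem_layerings {S : Finset V} {k : ℕ} {b : V → ℕ} :
    b ∈ layerings r S k ↔ IsLayering r S k b := by
  rw [layerings, mem_filter, Fintype.mem_piFinset]
  refine ⟨And.right, fun h => ⟨fun v => ?_, h⟩⟩
  split_ifs with hv
  · exact mem_range.2 (h.lt v hv)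
  · exact mem_singleton.2 (h.eq_zero_of_notMem v hv)

lemma isLayering_univ_iff {k : ℕ} {b : V → ℕ} :
    IsLayering r univ k b ↔ univ.image b = range k ∧ ∀ u w, r u w → b w < b u := by
  refine ⟨fun h => ⟨?_, fun u w => h.lt_of_rel u (mem_univ u) w (mem_univ w)⟩,
    fun ⟨himage, hrel⟩ => ⟨by simp, fun v _ => ?_, fun i hi => ?_, fun u _ w _ => hrel u w⟩⟩
  · ext i
    simp only [mem_image, mem_univ, true_and, mem_range]
    exact ⟨fun ⟨v, hv⟩ => hv ▸ h.lt v (mem_univ v), fun hi => by simpa using h.exists_eq i hi⟩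
  · exact mem_range.1 (himage ▸ mem_image_of_mem b (mem_univ v))
  · obtain ⟨v, -, hv⟩ := mem_image.1 (himage ▸ mem_range.2 hi : i ∈ univ.image b)
    exact ⟨v, mem_univ v, hv⟩

variable (r) in
lemma card_sinks_univ :
    #(sinks r univ) = Nat.card {x // ∀ u, ¬ r x u} := by
  rw [Nat.card_eq_fintype_card, Fintype.card_subtype]
  congr 1
  ext x
  simp [mem_sinks]

lemma sinks_nonempty (hr : ∀ x, ¬ Relation.TransGen r x x) {S : Finset V} (hS : S.Nonempty) :
    (sinks r S).Nonempty := by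
  have : IsStrictOrder V (Relation.TransGen (flip r)) :=
    { irrefl := fun x hx => hr x (Relation.transGen_swap.1 hx)
      trans := fun _ _ _ => Relation.TransGen.trans }
  have hwf : WellFounded (flip r) :=
    Subrelation.wf Relation.TransGen.single (Finite.wellFounded_of_trans_of_irrefl _)
  obtain ⟨x, hxS, hmin⟩ := hwf.has_min (S : Set V) (by simpa using hS)
  exact ⟨x, mem_sinks.2 ⟨hxS, fun u hu => hmin u hu⟩⟩

lemma layerings_empty_zero : layerings r ∅ 0 = {0} := by
  ext b
  rw [mem_layerings, mem_singleton]
  refine ⟨fun h => funext fun v => h.eq_zero_of_notMem v (notMem_empty v), ?_⟩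
  rintro rfl
  exact ⟨fun _ _ => rfl, by simp, by simp, by simp⟩

lemma layerings_zero_of_nonempty {S : Finset V} (hS : S.Nonempty) : layerings r S 0 = ∅ := by
  refine eq_empty_of_forall_notMem fun b hb => ?_
  obtain ⟨v, hv⟩ := hS
  exact Nat.not_lt_zero _ ((mem_layerings.1 hb).lt v hv)

lemma layerings_eq_empty_of_card_lt {S : Finset V} {k : ℕ} (hk : #S < k) :
    layerings r S k = ∅ := by
  refine eq_empty_of_forall_notMem fun b hb => ?_
  have hsurj : range k ⊆ S.image b := fun i hi => by
    obtain ⟨v, hv, rfl⟩ := (mem_layerings.1 hb).exists_eq i (mem_range.1 hi)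
    exact mem_image_of_mem b hv
  have := (card_le_card hsurj).trans card_image_le
  rw [card_range] at this
  omega

lemma card_layerings_filter_zeroFiber {S Z : Finset V} {k : ℕ} (hZ : Z ⊆ sinks r S)
    (hZne : Z.Nonempty) :
    #{b ∈ layerings r S (k + 1) | {v ∈ S | b v = 0} = Z} = #(layerings r (S \ Z) k) := by
  have hZS : Z ⊆ S := hZ.trans (sinks_subset S)
  refine card_bij' (fun b _ v => b v - 1) (fun b _ v => if v ∈ S \ Z then b v + 1 else 0)
    (fun b hb => ?_) (fun b hb => ?_) (fun b hb => ?_) (fun b hb => ?_)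
  · rw [mem_filter, mem_layerings] at hb
    exact mem_layerings.2 (hb.1.pred hb.2)
  · rw [mem_layerings] at hb
    exact mem_filter.2 ⟨mem_layerings.2 (hb.succ hZ hZne), IsLayering.zeroFiber_succ hZS⟩
  · rw [mem_filter, mem_layerings] at hb
    funext v
    by_cases hv : v ∈ S \ Z
    · have : b v ≠ 0 := fun h0 => by
        rw [mem_sdiff, ← hb.2, mem_filter] at hv
        exact hv.2 ⟨hv.1, h0⟩
      simp only [hv, if_true]
      omega
    · rw [if_neg hv]
      by_cases hvS : v ∈ S
      · have hvZ : v ∈ Z := by by_contra h; exact hv (mem_sdiff.2 ⟨hvS, h⟩)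
        rw [← hb.2, mem_filter] at hvZ
        exact hvZ.2.symm
      · exact (hb.1.eq_zero_of_notMem v hvS).symm
  · funext v
    by_cases hv : v ∈ S \ Z
    · simp [hv]
    · simp [hv, (mem_layerings.1 hb).eq_zero_of_notMem v hv]

lemma sum_layerings_succ (u : ℕ → ℚ) (S : Finset V) (k : ℕ) :
    ∑ b ∈ layerings r S (k + 1), u #{v ∈ S | b v = 0} =
      ∑ Z ∈ (sinks r S).powerset.erase ∅, u #Z * #(layerings r (S \ Z) k) := by
  have hmaps : ∀ b ∈ layerings r S (k + 1),
      {v ∈ S | b v = 0} ∈ (sinks r S).powerset.erase ∅ := fun b hb => by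
    have hb := mem_layerings.1 hb
    exact mem_erase.2 ⟨hb.zeroFiber_nonempty.ne_empty, mem_powerset.2 hb.zeroFiber_subset_sinks⟩
  rw [← sum_fiberwise_of_maps_to hmaps]
  refine sum_congr rfl fun Z hZ => ?_
  obtain ⟨hZne, hZ⟩ := mem_erase.1 hZ
  rw [sum_congr rfl fun b hb => by rw [(mem_filter.1 hb).2], sum_const,
    card_layerings_filter_zeroFiber (mem_powerset.1 hZ) (nonempty_iff_ne_empty.2 hZne),
    nsmul_eq_mul, mul_comm]

variable (r) in
noncomputable def layeringSum (u : ℕ → ℚ) (S : Finset V) : ℚ :=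
  ∑ k ∈ range (#S + 1), (-1) ^ (#S + k) * ∑ b ∈ layerings r S k, u #{v ∈ S | b v = 0}

lemma layeringSum_empty (u : ℕ → ℚ) : layeringSum r u ∅ = u 0 := by
  simp [layeringSum, layerings_empty_zero]

/-- Peeling off the bottom layer, which can be any nonempty set of sinks. -/
lemma layeringSum_eq_sum_sinks (u : ℕ → ℚ) {S : Finset V} (hS : S.Nonempty) :
    layeringSum r u S = ∑ Z ∈ (sinks r S).powerset.erase ∅,
      (-1) ^ (#Z + 1) * u #Z * layeringSum r 1 (S \ Z) := by
  rw [layeringSum, sum_range_succ', layerings_zero_of_nonempty hS, sum_empty, mul_zero,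
    add_zero]
  simp_rw [sum_layerings_succ, mul_sum]
  rw [sum_comm]
  refine sum_congr rfl fun Z hZ => ?_
  obtain ⟨hZne, hZ⟩ := mem_erase.1 hZ
  have hcard : #(S \ Z) + #Z = #S := card_sdiff_add_card_eq_card ((mem_powerset.1 hZ).trans
    (sinks_subset S))
  have hZpos : 0 < #Z := card_pos.2 (nonempty_iff_ne_empty.2 hZne)
  have hrange : layeringSum r 1 (S \ Z) = ∑ k ∈ range #S,
      (-1) ^ (#(S \ Z) + k) * (#(layerings r (S \ Z) k) : ℚ) := by
    simp only [layeringSum, Pi.one_apply, sum_const, nsmul_eq_mul, mul_one]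
    refine sum_subset (range_subset_range.2 (by omega)) fun k hk hk' => ?_
    rw [mem_range] at hk hk'
    simp [layerings_eq_empty_of_card_lt (r := r) (show #(S \ Z) < k by omega)]
  rw [hrange, mul_sum]
  refine sum_congr rfl fun k _ => ?_
  rw [← hcard]
  ring

lemma sum_pow_card_powerset {α R : Type*} [CommSemiring R] (M : Finset α) (x : R) :
    ∑ Z ∈ M.powerset, x ^ #Z = (x + 1) ^ #M := by
  simpa using sum_pow_mul_eq_add_pow x 1 M

lemma sum_neg_one_pow_powerset_erase_empty {α R : Type*} [CommRing R] {M : Finset α}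
    (hM : M.Nonempty) : ∑ Z ∈ M.powerset.erase ∅, (-1 : R) ^ (#Z + 1) = 1 := by
  simp_rw [pow_succ, mul_neg_one, sum_neg_distrib]
  rw [sum_erase_eq_sub (empty_mem_powerset M), sum_pow_card_powerset, neg_add_cancel,
    zero_pow (card_ne_zero.2 hM)]
  simp

lemma sum_sinkWeight_powerset_erase_empty {α : Type*} {M : Finset α} (hM : M.Nonempty) (t : ℚ) :
    ∑ Z ∈ M.powerset.erase ∅, (-1) ^ (#Z + 1) * sinkWeight t #Z = t ^ #M := by
  have hterm : ∀ Z ∈ M.powerset.erase ∅,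
      (-1) ^ (#Z + 1) * sinkWeight t #Z = (t - 1) ^ #Z - (-1) ^ #Z := fun Z hZ => by
    rw [sinkWeight, if_neg (card_ne_zero.2 (nonempty_iff_ne_empty.2 (mem_erase.1 hZ).1)),
      show t - 1 = -1 * (1 - t) by ring, mul_pow]
    ring
  rw [sum_congr rfl hterm, sum_erase_eq_sub (empty_mem_powerset M), sum_sub_distrib,
    sum_pow_card_powerset, sum_pow_card_powerset, neg_add_cancel, zero_pow (card_ne_zero.2 hM)]
  simp

lemma layeringSum_one (hr : ∀ x, ¬ Relation.TransGen r x x) (S : Finset V) :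
    layeringSum r 1 S = 1 := by
  induction S using Finset.strongInduction with
  | H S ih =>
    rcases S.eq_empty_or_nonempty with rfl | hS
    · exact layeringSum_empty 1
    rw [layeringSum_eq_sum_sinks 1 hS]
    refine (sum_congr rfl fun Z hZ => ?_).trans
      (sum_neg_one_pow_powerset_erase_empty (sinks_nonempty hr hS))
    obtain ⟨hZne, hZ⟩ := mem_erase.1 hZ
    rw [ih _ (sdiff_ssubset ((mem_powerset.1 hZ).trans (sinks_subset S))
      (nonempty_iff_ne_empty.2 hZne)), Pi.one_apply, mul_one, mul_one]

theorem layeringSum_sinkWeight (hr : ∀ x, ¬ Relation.TransGen r x x) (t : ℚ) (S : Finset V) :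
    layeringSum r (sinkWeight t) S = t ^ #(sinks r S) := by
  rcases S.eq_empty_or_nonempty with rfl | hS
  · simp [layeringSum_empty, sinkWeight, sinks]
  rw [layeringSum_eq_sum_sinks _ hS, ← sum_sinkWeight_powerset_erase_empty (sinks_nonempty hr hS)]
  refine sum_congr rfl fun Z _ => ?_
  rw [layeringSum_one hr, mul_one]

end Layering

section Orientation

variable {V : Type*} (G : SimpleGraph V)

structure IsAcyclicOrientation (o : V → V → Prop) : Prop where
  adj : ∀ u w, o u w → G.Adj u w
  rel_iff_not_rel : ∀ u w, G.Adj u w → (o u w ↔ ¬ o w u)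
  irrefl_transGen : ∀ x, ¬ Relation.TransGen o x x

def orientationOf (c : V → ℕ) (u w : V) : Prop := G.Adj u w ∧ c w < c u

variable {G}

lemma isAcyclicOrientation_orientationOf {c : V → ℕ} (hc : ∀ u w, G.Adj u w → c u ≠ c w) :
    IsAcyclicOrientation G (orientationOf G c) := by
  refine ⟨fun u w h => h.1, fun u w huw => ?_, fun x hx => ?_⟩
  · have := hc u w huw
    simp only [orientationOf, huw, huw.symm, true_and, not_lt]
    omega
  · have : Relation.TransGen (· > ·) (c x) (c x) := hx.lift c fun _ _ h => h.2
    rw [Relation.transGen_eq_self] at this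
    exact lt_irrefl _ this

variable [Fintype V]

variable (G) in
noncomputable def acyclicOrientations : Finset (V → V → Prop) := {o | IsAcyclicOrientation G o}

namespace IsAcyclicOrientation

variable {o : V → V → Prop} {k : ℕ} {c : V → ℕ}

lemma orientationOf_eq (ho : IsAcyclicOrientation G o) (hc : IsLayering o univ k c) :
    orientationOf G c = o := by
  have hlt := (isLayering_univ_iff.1 hc).2
  funext u w
  refine propext ⟨fun ⟨huw, hcw⟩ => ?_, fun h => ⟨ho.adj u w h, hlt u w h⟩⟩
  by_contra h
  have := hlt w u (((ho.rel_iff_not_rel w u huw.symm).2 h))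
  omega

lemma proper_of_isLayering (ho : IsAcyclicOrientation G o) (hc : IsLayering o univ k c)
    (u w : V) (huw : G.Adj u w) : c u ≠ c w := by
  have hlt := (isLayering_univ_iff.1 hc).2
  by_cases h : o u w
  · exact (hlt u w h).ne'
  · exact (hlt w u ((ho.rel_iff_not_rel w u huw.symm).2 h)).ne

end IsAcyclicOrientation

lemma mem_biUnion_layerings_iff {k : ℕ} {c : V → ℕ} :
    c ∈ (acyclicOrientations G).biUnion (layerings · univ k) ↔
      (∀ u w, G.Adj u w → c u ≠ c w) ∧ univ.image c = range k := by
  simp only [mem_biUnion, acyclicOrientations, mem_filter, mem_univ, true_and, mem_layerings]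
  refine ⟨fun ⟨o, ho, hc⟩ => ⟨ho.proper_of_isLayering hc, (isLayering_univ_iff.1 hc).1⟩,
    fun ⟨hc, himage⟩ => ⟨orientationOf G c, isAcyclicOrientation_orientationOf hc,
      isLayering_univ_iff.2 ⟨himage, fun _ _ h => h.2⟩⟩⟩

lemma coeff_XG {k : ℕ} {d : ℕ →₀ ℕ} (hd : d ∈ compositions (Fintype.card V) k) :
    MvPowerSeries.coeff d (XG G) =
      #{c ∈ (acyclicOrientations G).biUnion (layerings · univ k) | colorCount c = d} := by
  change (Nat.card _ : ℚ) = _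
  rw [← Nat.card_eq_finsetCard]
  congr 1
  refine Nat.card_congr (Equiv.subtypeEquivRight fun c => ?_)
  rw [mem_filter, mem_biUnion_layerings_iff]
  have hcount : (∀ i, #{v | c v = i} = d i) ↔ colorCount c = d := by
    simp only [Finsupp.ext_iff, colorCount_apply]
  rw [hcount]
  exact ⟨fun ⟨hc, hd'⟩ => ⟨⟨hc, colorCount_mem_compositions_iff.1 (hd' ▸ hd)⟩, hd'⟩,
    fun ⟨⟨hc, _⟩, hd'⟩ => ⟨hc, hd'⟩⟩

variable (G) in
theorem sinkFunctional_XG (t : ℚ) :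
    sinkFunctional (Fintype.card V) t (XG G) =
      ∑ o ∈ acyclicOrientations G, t ^ #(sinks o univ) := by
  rw [sinkFunctional_apply_eq_sum_colorings t (XG G) _
    (fun k c hc => (mem_biUnion_layerings_iff.1 hc).2) (fun k d hd => coeff_XG hd)]
  have hdisj : ∀ k, (acyclicOrientations G : Set (V → V → Prop)).PairwiseDisjoint
      (layerings · univ k) := by
    intro k o ho o' ho' hne
    refine disjoint_left.2 fun c hc hc' => hne ?_
    simp only [coe_filter, acyclicOrientations, mem_univ, true_and, Set.mem_ofPred_eq] at ho ho'
    rw [← ho.orientationOf_eq (mem_layerings.1 hc), ← ho'.orientationOf_eq (mem_layerings.1 hc')]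
  simp_rw [sum_biUnion (hdisj _), mul_sum]
  rw [sum_comm]
  refine sum_congr rfl fun o ho => ?_
  simp only [acyclicOrientations, mem_filter, mem_univ, true_and] at ho
  rw [← layeringSum_sinkWeight ho.irrefl_transGen, layeringSum, card_univ]
  simp_rw [mul_sum]

end Orientation

section ElementarySymmetric

lemma toFinsupp_val_apply {α : Type*} [DecidableEq α] (s : Finset α) (j : α) :
    Multiset.toFinsupp s.val j = if j ∈ s then 1 else 0 := by
  simp [Multiset.count_eq_of_nodup s.nodup]

lemma support_toFinsupp_val {α : Type*} [DecidableEq α] (s : Finset α) :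
    (Multiset.toFinsupp s.val).support = s := by
  rw [Multiset.toFinsupp_support, val_toFinset]

lemma toFinsupp_val_support {α : Type*} [DecidableEq α] (e : α →₀ ℕ)
    (he : ∀ j ∈ e.support, e j = 1) :
    Multiset.toFinsupp e.support.val = e := by
  ext j
  rw [toFinsupp_val_apply]
  split_ifs with hj
  · exact (he j hj).symm
  · exact (Finsupp.notMem_support_iff.1 hj).symm

lemma coeff_eps (m : ℕ) (e : ℕ →₀ ℕ) :
    MvPowerSeries.coeff e (eps m) = if #e.support = m ∧ ∀ j ∈ e.support, e j = 1 then 1 else 0 :=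
  rfl

variable {ι : Type*} [Fintype ι] (f : ι → ℕ)

/-- `T i` is the set of variables of the monomial taken from `e_{f i}`. -/
lemma coeff_prod_eps (d : ℕ →₀ ℕ) :
    MvPowerSeries.coeff d (∏ i, eps (f i)) =
      Nat.card {T : ι → Finset ℕ // (∀ i, #(T i) = f i) ∧ ∀ j, #{i | j ∈ T i} = d j} := by
  have hprod : ∀ l : ι →₀ ℕ →₀ ℕ, ∏ i, MvPowerSeries.coeff (l i) (eps (f i)) =
      if ∀ i, #(l i).support = f i ∧ ∀ j ∈ (l i).support, l i j = 1 then 1 else 0 := fun l => by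
    simp only [coeff_eps, prod_boole, mem_univ, true_imp_iff]
  rw [MvPowerSeries.coeff_prod, sum_congr rfl fun l _ => hprod l, sum_boole]
  rw [← Nat.card_eq_finsetCard]
  congr 1
  refine Nat.card_congr
    { toFun := fun l => ⟨fun i => (l.1 i).support, fun i => ((mem_filter.1 l.2).2 i).1,
        fun j => ?_⟩
      invFun := fun T => ⟨Finsupp.equivFunOnFinite.symm fun i => Multiset.toFinsupp (T.1 i).val, ?_⟩
      left_inv := fun l => Subtype.ext <| Finsupp.ext fun i =>
        toFinsupp_val_support _ ((mem_filter.1 l.2).2 i).2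
      right_inv := fun T => Subtype.ext <| funext fun i => (T.1 i).val_toFinset }
  · obtain ⟨hsum, -⟩ := mem_finsuppAntidiag.1 (mem_filter.1 l.2).1
    rw [← DFunLike.congr_fun hsum j, Finsupp.finsetSum_apply, card_filter]
    refine sum_congr rfl fun i _ => ?_
    rw [← toFinsupp_val_support (l.1 i) ((mem_filter.1 l.2).2 i).2, toFinsupp_val_apply]
  · have happly : ∀ i, (Finsupp.equivFunOnFinite.symm fun i => Multiset.toFinsupp (T.1 i).val) i =
        Multiset.toFinsupp (T.1 i).val := fun i => rfl
    refine mem_filter.2 ⟨mem_finsuppAntidiag.2 ⟨Finsupp.ext fun j => ?_, by simp⟩,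
      fun i => ⟨by rw [happly, support_toFinsupp_val, T.2.1 i], fun j hj => ?_⟩⟩
    · rw [Finsupp.finsetSum_apply, ← T.2.2 j, card_filter]
      exact sum_congr rfl fun i _ => by rw [happly, toFinsupp_val_apply]
    · rw [happly, support_toFinsupp_val] at hj
      rw [happly, toFinsupp_val_apply, if_pos hj]

end ElementarySymmetric

section Blocks

variable {ι : Type*} (f : ι → ℕ)

/-- A transitive tournament on each block `Fin (f i)`: its layerings are the tuples of sets counted
by the coefficients of `∏ i, e_{f i}`, and it has one sink per block. -/
def blockOrder (a b : Σ i, Fin (f i)) : Prop := a.1 = b.1 ∧ (b.2 : ℕ) < a.2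

lemma blockOrder_irrefl_transGen (a : Σ i, Fin (f i)) : ¬ Relation.TransGen (blockOrder f) a a := by
  intro ha
  have : Relation.TransGen (· > ·) (a.2 : ℕ) a.2 := ha.lift (fun a => (a.2 : ℕ)) fun _ _ h => h.2
  rw [Relation.transGen_eq_self] at this
  exact lt_irrefl _ this

variable {f}

lemma lt_of_blockOrder_iff_strictMono {b : (Σ i, Fin (f i)) → ℕ} :
    (∀ a a', blockOrder f a a' → b a' < b a) ↔ ∀ i, StrictMono fun x => b ⟨i, x⟩ := by
  refine ⟨fun h i x y hxy => h ⟨i, y⟩ ⟨i, x⟩ ⟨rfl, hxy⟩, fun h ⟨i, x⟩ ⟨i', y⟩ ⟨hi, hxy⟩ => ?_⟩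
  subst hi
  exact h i hxy

variable (f) in
noncomputable def blockEquiv : {T : ι → Finset ℕ // ∀ i, #(T i) = f i} ≃
    {b : (Σ i, Fin (f i)) → ℕ // ∀ i, StrictMono fun x => b ⟨i, x⟩} where
  toFun T := ⟨fun a => (T.1 a.1).orderEmbOfFin (T.2 a.1) a.2,
    fun i => ((T.1 i).orderEmbOfFin (T.2 i)).strictMono⟩
  invFun b := ⟨fun i => univ.image fun x => b.1 ⟨i, x⟩, fun i => by
    rw [card_image_of_injective _ (b.2 i).injective, card_univ, Fintype.card_fin]⟩
  left_inv T := Subtype.ext <| funext fun i => image_orderEmbOfFin_univ (T.1 i) (T.2 i)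
  right_inv b := Subtype.ext <| funext fun ⟨i, x⟩ => congrFun
    (orderEmbOfFin_unique _ (fun x => mem_image_of_mem _ (mem_univ x)) (b.2 i)).symm x

variable [Fintype ι]

variable (f) in
lemma card_sinks_blockOrder (hf : ∀ i, 0 < f i) :
    #(sinks (blockOrder f) univ) = Fintype.card ι := by
  refine card_nbij' Sigma.fst (fun i => ⟨i, ⟨0, hf i⟩⟩) (fun _ _ => mem_coe.2 (mem_univ _))
    (fun i _ => mem_sinks.2 ⟨mem_univ _, fun u _ h => Nat.not_lt_zero _ h.2⟩)
    (fun ⟨i, x⟩ ha => ?_) (fun _ _ => rfl)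
  have hx : (x : ℕ) = 0 := by
    by_contra hx
    exact (mem_sinks.1 ha).2 ⟨i, ⟨0, hf i⟩⟩ (mem_univ _) ⟨rfl, Nat.pos_of_ne_zero hx⟩
  simp only [Sigma.mk.injEq, heq_eq_eq, true_and]
  exact Fin.ext hx.symm

lemma card_filter_eq_card_blocks {b : (Σ i, Fin (f i)) → ℕ}
    (hb : ∀ i, StrictMono fun x => b ⟨i, x⟩) (j : ℕ) :
    #{a | b a = j} = #{i | j ∈ univ.image fun x => b ⟨i, x⟩} := by
  refine card_bij (fun a _ => a.1) (fun ⟨i, x⟩ ha => ?_) (fun ⟨i, x⟩ ha ⟨i', y⟩ ha' h => ?_)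
    (fun i hi => ?_)
  · exact mem_filter.2 ⟨mem_univ i, mem_image.2 ⟨x, mem_univ x, (mem_filter.1 ha).2⟩⟩
  · obtain rfl : i = i' := h
    rw [(hb i).injective ((mem_filter.1 ha).2.trans (mem_filter.1 ha').2.symm)]
  · obtain ⟨x, -, hx⟩ := mem_image.1 (mem_filter.1 hi).2
    exact ⟨⟨i, x⟩, mem_filter.2 ⟨mem_univ _, hx⟩, rfl⟩

lemma coeff_prod_eps_eq_card_layerings {k : ℕ} {d : ℕ →₀ ℕ}
    (hd : d ∈ compositions (Fintype.card (Σ i, Fin (f i))) k) :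
    MvPowerSeries.coeff d (∏ i, eps (f i)) =
      #{b ∈ layerings (blockOrder f) univ k | colorCount b = d} := by
  rw [coeff_prod_eps, ← Nat.card_eq_finsetCard]
  congr 1
  calc Nat.card {T : ι → Finset ℕ // (∀ i, #(T i) = f i) ∧ ∀ j, #{i | j ∈ T i} = d j}
      = Nat.card {T : {T : ι → Finset ℕ // ∀ i, #(T i) = f i} // ∀ j, #{i | j ∈ T.1 i} = d j} :=
        Nat.card_congr (Equiv.subtypeSubtypeEquivSubtypeInter _ _).symm
    _ = Nat.card {b : {b : (Σ i, Fin (f i)) → ℕ // ∀ i, StrictMono fun x => b ⟨i, x⟩} //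
          colorCount b.1 = d} :=
        Nat.card_congr <| (Equiv.subtypeEquiv (blockEquiv f).symm fun b => by
          simp only [Finsupp.ext_iff, colorCount_apply, card_filter_eq_card_blocks b.2]
          rfl).symm
    _ = Nat.card {b // b ∈ {b ∈ layerings (blockOrder f) univ k | colorCount b = d}} := by
        refine Nat.card_congr ((Equiv.subtypeSubtypeEquivSubtypeInter
          (fun b : (Σ i, Fin (f i)) → ℕ => ∀ i, StrictMono fun x => b ⟨i, x⟩)
          (colorCount · = d)).trans (Equiv.subtypeEquivRight fun b => ?_))
        rw [mem_filter, mem_layerings, isLayering_univ_iff, lt_of_blockOrder_iff_strictMono]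
        exact ⟨fun ⟨hb, hbd⟩ => ⟨⟨colorCount_mem_compositions_iff.1 (hbd ▸ hd), hb⟩, hbd⟩,
          fun ⟨⟨_, hb⟩, hbd⟩ => ⟨hb, hbd⟩⟩

variable (f) in
theorem sinkFunctional_prod_eps (hf : ∀ i, 0 < f i) (t : ℚ) :
    sinkFunctional (∑ i, f i) t (∏ i, eps (f i)) = t ^ Fintype.card ι := by
  have hN : Fintype.card (Σ i, Fin (f i)) = ∑ i, f i := by simp
  rw [← hN, sinkFunctional_apply_eq_sum_colorings t _ (layerings (blockOrder f) univ)
    (fun k b hb => (isLayering_univ_iff.1 (mem_layerings.1 hb)).1)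
    (fun k d hd => coeff_prod_eps_eq_card_layerings hd), ← card_sinks_blockOrder f hf,
    ← layeringSum_sinkWeight (blockOrder_irrefl_transGen f) t univ, layeringSum, card_univ]

end Blocks

theorem sinkFunctional_epsP {N : ℕ} (P : Nat.Partition N) (t : ℚ) :
    sinkFunctional N t (epsP P) = t ^ Multiset.card P.parts := by
  have h := sinkFunctional_prod_eps (fun x : P.parts => (x : ℕ))
    (fun x => P.parts_pos Multiset.coe_mem) t
  rwa [← Multiset.sum_eq_sum_coe, P.parts_sum, Multiset.card_coe, Finset.prod_eq_multiset_prod,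
    Multiset.map_univ, ← epsP] at h

lemma sum_filter_eq_of_forall_sum_mul_pow_eq {α β R : Type*} [CommRing R] [IsDomain R]
    [Infinite R] (s : Finset α) (s' : Finset β) (a : α → R) (b : β → R) (m : α → ℕ)
    (n : β → ℕ) (h : ∀ t : R, ∑ i ∈ s, a i * t ^ m i = ∑ i ∈ s', b i * t ^ n i) (j : ℕ) :
    ∑ i ∈ s with m i = j, a i = ∑ i ∈ s' with n i = j, b i := by
  open Polynomial in
  have hpoly : ∑ i ∈ s, C (a i) * X ^ m i = ∑ i ∈ s', C (b i) * X ^ n i :=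
    funext fun t => by simpa [eval_finsetSum] using h t
  simpa [finsetSum_coeff, coeff_C_mul_X_pow, sum_filter, eq_comm] using
    congrArg (Polynomial.coeff · j) hpoly

end StanleySink

open Finset StanleySink in
theorem stmt12_general {V : Type*} [Fintype V] (G : SimpleGraph V)
    (c : Nat.Partition (Fintype.card V) → ℚ)
    (hX : XG G = ∑ P : Nat.Partition (Fintype.card V), c P • epsP P) (j : ℕ) :
    (Nat.card {o : V → V → Prop //
        (∀ u w : V, o u w → G.Adj u w) ∧
        (∀ u w : V, G.Adj u w → (o u w ↔ ¬ o w u)) ∧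
        (∀ x : V, ¬ Relation.TransGen o x x) ∧
        Nat.card {x : V // ∀ u : V, ¬ o x u} = j} : ℚ) =
      ∑ P ∈ Finset.univ.filter
        (fun P : Nat.Partition (Fintype.card V) => P.parts.card = j), c P := by
  have hpoly (t : ℚ) : ∑ o ∈ acyclicOrientations G, 1 * t ^ #(sinks o univ) =
      ∑ P, c P * t ^ Multiset.card P.parts := by
    simp_rw [one_mul, ← sinkFunctional_XG, hX, map_sum, map_smul, sinkFunctional_epsP, smul_eq_mul]
  rw [← sum_filter_eq_of_forall_sum_mul_pow_eq _ _ _ _ _ _ hpoly j, sum_const, nsmul_one,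
    ← Nat.card_eq_finsetCard]
  congr 1
  refine Nat.card_congr (Equiv.subtypeEquivRight fun o => ?_)
  simp only [mem_filter, acyclicOrientations, mem_univ, true_and, card_sinks_univ]
  exact ⟨fun ⟨h1, h2, h3, h4⟩ => ⟨⟨h1, h2, h3⟩, h4⟩, fun ⟨⟨h1, h2, h3⟩, h4⟩ => ⟨h1, h2, h3, h4⟩⟩

/-- Stanley's sink theorem: for a finite graph `G` with
`X_G = Σ_λ c_λ e_λ`, the number of acyclic orientations of `G` with exactly `j`
sinks equals `Σ_{ℓ(λ) = j} c_λ`.  An orientation is a relation `o` choosing one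
direction for each edge; it is acyclic when its transitive closure is
irreflexive, and a sink is a vertex with no outgoing edge. -/
theorem stmt12 {V : Type*} [Fintype V] [DecidableEq V] (G : SimpleGraph V)
    (c : Nat.Partition (Fintype.card V) → ℚ)
    (hX : XG G = ∑ P : Nat.Partition (Fintype.card V), c P • epsP P) (j : ℕ) :
    (Nat.card {o : V → V → Prop //
        (∀ u w : V, o u w → G.Adj u w) ∧
        (∀ u w : V, G.Adj u w → (o u w ↔ ¬ o w u)) ∧
        (∀ x : V, ¬ Relation.TransGen o x x) ∧
        Nat.card {x : V // ∀ u : V, ¬ o x u} = j} : ℚ) =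
      ∑ P ∈ Finset.univ.filter
        (fun P : Nat.Partition (Fintype.card V) => P.parts.card = j), c P :=
  stmt12_general G c hX j
end

section
/- For a finite graph G on vertex set V with vertex variables, and a function α : V → ℕ, let G^α be the graph obtained by replacing each vertex v by a clique K_{α(v)}, with complete bipartite connections between cliques of adjacent vertices. Then, setting T(x,v) = Σ_λ m_λ(x) e_λ^G(v), the coefficient of v^α = ∏_v v^{α(v)} in T(x,v), multiplied by ∏_v α(v)!, equals the chromatic symmetric function X_{G^α}. -/
open scoped Classical

/-- The `i`-th elementary `G`-symmetric polynomial (rational coefficients). -/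
noncomputable def eGraph {V : Type*} [Fintype V] (G : SimpleGraph V) (i : ℕ) :
    MvPolynomial V ℚ :=
  ∑ S ∈ (Finset.univ.powersetCard i).filter
      (fun S => ∀ u ∈ S, ∀ w ∈ S, ¬ G.Adj u w),
    ∏ v ∈ S, MvPolynomial.X v

/-- The partition (multiset of nonzero exponents) of a monomial `x^d`. -/
def partOf (d : ℕ →₀ ℕ) : Multiset ℕ := d.support.val.map d

/-- `T(x, v) = Σ_λ m_λ(x) e^G_λ(v)`, as a power series in the `x`-variables
with coefficients in the polynomial ring on the vertex variables: the
coefficient of `x^d` is `e^G_λ(v)` for `λ` the partition of the monomial `d`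
(each monomial of `x` occurs in exactly one monomial symmetric function). -/
noncomputable def TGF {V : Type*} [Fintype V] (G : SimpleGraph V) :
    MvPowerSeries ℕ (MvPolynomial V ℚ) :=
  fun d => ((partOf d).map (eGraph G)).prod

/-- The clique expansion `G^α`: each vertex `v` is replaced by a clique on
`α v` vertices, with complete connections between the cliques of adjacent
vertices. -/
def cliqueExp {V : Type*} (G : SimpleGraph V) (α : V → ℕ) :
    SimpleGraph (Σ v : V, Fin (α v)) where
  Adj a b := a ≠ b ∧ (a.1 = b.1 ∨ G.Adj a.1 b.1)
  symm := by
    constructor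
    rintro a b ⟨h1, h2⟩
    refine ⟨h1.symm, ?_⟩
    rcases h2 with h | h
    · exact Or.inl h.symm
    · exact Or.inr h.symm
  loopless := by constructor; rintro a ⟨h, -⟩; exact h rfl

/-!
Expanding the product `∏ᵢ e^G_{dᵢ}`, the coefficient of `v^α` in the `x^d`-coefficient of `T`
counts the families `(Sᵢ)` of independent sets with `#Sᵢ = dᵢ` that cover each vertex `v`
exactly `α v` times. A proper colouring of `G^α` with class sizes `d` determines such a family
(`Sᵢ` is the set of vertices one of whose copies gets colour `i`), and the colourings inducing a
given family amount to a choice, for each `v`, of a bijection between the `α v` copies of `v` and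
the `α v` colours `i` with `v ∈ Sᵢ`; there are `∏ α(v)!` such choices.
-/

open Finset MvPolynomial SimpleGraph
open scoped Nat

lemma sum_single_one_eq_iff {V ι : Type*} [Fintype ι] (F : ι → Finset V) (α : V →₀ ℕ) :
    ∑ i, ∑ v ∈ F i, Finsupp.single v 1 = α ↔ ∀ v, #{i | v ∈ F i} = α v := by
  rw [Finsupp.ext_iff]
  refine forall_congr' fun w => ?_
  simp only [Finsupp.finsetSum_apply, Finsupp.single_apply, sum_ite_eq', card_filter]

section Coefficients

variable {V ι : Type*} [Fintype V] [Fintype ι] [DecidableEq ι]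

lemma eGraph_eq_sum_indepSetFinset (G : SimpleGraph V) (k : ℕ) :
    eGraph G k = ∑ S ∈ G.indepSetFinset k, monomial (∑ v ∈ S, Finsupp.single v 1) 1 := by
  rw [eGraph]
  refine sum_congr ?_ fun S _ => by simp_rw [monomial_sum_one, ← X_pow_eq_monomial, pow_one]
  ext S
  simp only [mem_filter, mem_powersetCard_univ, mem_indepSetFinset_iff, isNIndepSet_iff,
    isIndepSet_iff, Set.Pairwise, mem_coe]
  exact ⟨fun ⟨hk, h⟩ => ⟨fun u hu w hw _ => h u hu w hw, hk⟩,
    fun ⟨h, hk⟩ => ⟨hk, fun u hu w hw hadj => h hu hw (G.ne_of_adj hadj) hadj⟩⟩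

lemma TGF_apply (G : SimpleGraph V) (d : ℕ →₀ ℕ) :
    TGF G d = ∏ i : d.support, eGraph G (d i) := by
  rw [prod_coe_sort d.support fun i => eGraph G (d i), prod_eq_multiset_prod, TGF, partOf,
    Multiset.map_map]
  rfl

noncomputable def indepCovers (G : SimpleGraph V) (k : ι → ℕ) (α : V → ℕ) :
    Finset (ι → Finset V) :=
  {F ∈ Fintype.piFinset fun i => G.indepSetFinset (k i) | ∀ v, #{i | v ∈ F i} = α v}

theorem coeff_prod_eGraph (G : SimpleGraph V) (k : ι → ℕ) (α : V →₀ ℕ) :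
    coeff α (∏ i, eGraph G (k i)) = #(indepCovers G k α) := by
  simp_rw [eGraph_eq_sum_indepSetFinset, prod_univ_sum, coeff_sum, ← monomial_sum_one,
    coeff_monomial, indepCovers, ← sum_single_one_eq_iff]
  rw [sum_boole]

end Coefficients

section Colorings

variable {X ι : Type*} [Fintype X]

def IsColoringWithClassSizes [DecidableEq ι] (H : SimpleGraph X) (k : ι → ℕ) (c : X → ι) :
    Prop :=
  (∀ x y, H.Adj x y → c x ≠ c y) ∧ ∀ i, #{x | c x = i} = k i

lemma IsColoringWithClassSizes.mem_support {H : SimpleGraph X} {d : ℕ →₀ ℕ} {c : X → ℕ}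
    (hc : IsColoringWithClassSizes H d c) (x : X) : c x ∈ d.support := by
  rw [Finsupp.mem_support_iff, ← hc.2 (c x)]
  exact card_ne_zero_of_mem (mem_filter.2 ⟨mem_univ x, rfl⟩)

/-- Colours outside the support of `d` are never used. -/
noncomputable def coloringsEquivSupport (H : SimpleGraph X) (d : ℕ →₀ ℕ) :
    {c : X → ℕ // IsColoringWithClassSizes H d c} ≃
      {c : X → d.support // IsColoringWithClassSizes H (fun i : d.support => d i) c} where
  toFun c := ⟨fun x => ⟨c.1 x, c.2.mem_support x⟩,
    fun x y hxy h => c.2.1 x y hxy (congrArg Subtype.val h),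
    fun i => by simpa [Subtype.ext_iff] using c.2.2 i⟩
  invFun c := ⟨fun x => c.1 x, fun x y hxy h => c.2.1 x y hxy (Subtype.ext h), fun i => by
    by_cases hi : i ∈ d.support
    · simpa [Subtype.ext_iff] using c.2.2 ⟨i, hi⟩
    · rw [Finsupp.notMem_support_iff.1 hi, card_eq_zero, filter_eq_empty_iff]
      exact fun x _ hx => hi (hx ▸ (c.1 x).2)⟩
  left_inv c := rfl
  right_inv c := rfl

end Colorings

section CliqueExpansion

variable {V ι : Type*} [Fintype V] {G : SimpleGraph V} {α : V → ℕ}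

noncomputable def vertexClasses (c : (Σ v, Fin (α v)) → ι) (i : ι) : Finset V :=
  {v | ∃ j, c ⟨v, j⟩ = i}

lemma mem_vertexClasses {c : (Σ v, Fin (α v)) → ι} {i : ι} {v : V} :
    v ∈ vertexClasses c i ↔ ∃ j, c ⟨v, j⟩ = i := by
  simp [vertexClasses]

lemma isProper_cliqueExp_iff (c : (Σ v, Fin (α v)) → ι) :
    (∀ x y, (cliqueExp G α).Adj x y → c x ≠ c y) ↔
      (∀ v, Function.Injective fun j => c ⟨v, j⟩) ∧ ∀ i, G.IsIndepSet (vertexClasses c i) := by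
  refine ⟨fun h => ⟨fun v j j' hjj' => ?_, fun i u hu w hw huw hadj => ?_⟩, ?_⟩
  · by_contra hne
    exact h ⟨v, j⟩ ⟨v, j'⟩ ⟨fun e => hne (by simpa using e), Or.inl rfl⟩ hjj'
  · obtain ⟨j, hj⟩ := mem_vertexClasses.1 hu
    obtain ⟨j', hj'⟩ := mem_vertexClasses.1 hw
    exact h ⟨u, j⟩ ⟨w, j'⟩ ⟨fun e => huw (congrArg Sigma.fst e), Or.inr hadj⟩ (hj.trans hj'.symm)
  · rintro ⟨hinj, hindep⟩ ⟨u, j⟩ ⟨w, j'⟩ ⟨hne, rfl | hadj⟩ hc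
    · exact hne (congrArg _ (hinj u hc))
    · exact hindep (c ⟨u, j⟩) (mem_vertexClasses.2 ⟨j, rfl⟩) (mem_vertexClasses.2 ⟨j', hc.symm⟩)
        (G.ne_of_adj hadj) hadj

lemma card_colorClass_eq_card_vertexClasses [DecidableEq ι] {c : (Σ v, Fin (α v)) → ι}
    (hc : ∀ v, Function.Injective fun j => c ⟨v, j⟩) (i : ι) :
    #{x | c x = i} = #(vertexClasses c i) := by
  rw [← card_image_of_injOn (f := Sigma.fst)]
  · congr 1
    ext v
    simp [mem_vertexClasses]
  · rintro ⟨v, j⟩ hj ⟨w, j'⟩ hj' (rfl : v = w)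
    simp only [coe_filter, mem_univ, true_and, Set.mem_ofPred_eq] at hj hj'
    rw [hc v (hj.trans hj'.symm)]

noncomputable def properColoringsFiberEquiv {F : ι → Finset V} (hF : ∀ i, G.IsIndepSet (F i)) :
    {c : (Σ v, Fin (α v)) → ι // (∀ x y, (cliqueExp G α).Adj x y → c x ≠ c y) ∧
      vertexClasses c = F} ≃ Π v, Fin (α v) ≃ {i // v ∈ F i} where
  toFun c v := Equiv.ofBijective
    (fun j => ⟨c.1 ⟨v, j⟩, congrFun c.2.2 _ ▸ mem_vertexClasses.2 ⟨j, rfl⟩⟩)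
    ⟨fun j j' h => ((isProper_cliqueExp_iff c.1).1 c.2.1).1 v (congrArg Subtype.val h),
      fun ⟨i, hi⟩ => by
        obtain ⟨j, hj⟩ := mem_vertexClasses.1 (congrFun c.2.2 i ▸ hi)
        exact ⟨j, Subtype.ext hj⟩⟩
  invFun e := by
    have hclasses : vertexClasses (fun x => (e x.1 x.2 : ι)) = F := by
      ext i v
      exact mem_vertexClasses.trans
        ⟨fun ⟨j, hj⟩ => hj ▸ (e v j).2, fun hv => ⟨(e v).symm ⟨i, hv⟩, by simp⟩⟩
    exact ⟨fun x => e x.1 x.2, (isProper_cliqueExp_iff _).2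
      ⟨fun v => Subtype.val_injective.comp (e v).injective, by rw [hclasses]; exact hF⟩, hclasses⟩
  left_inv c := rfl
  right_inv e := by ext; rfl

lemma card_equiv_fin (n : ℕ) (β : Type*) [Fintype β] [DecidableEq β] :
    Fintype.card (Fin n ≃ β) = if Fintype.card β = n then n ! else 0 := by
  split_ifs with h
  · rw [Fintype.card_equiv (Fintype.equivFinOfCardEq h).symm, Fintype.card_fin]
  · exact Fintype.card_eq_zero_iff.2 ⟨fun e => h (by simpa using (Fintype.card_congr e).symm)⟩

variable [Fintype ι] [DecidableEq ι]

lemma card_coloringsWithClassSizes_of_vertexClasses_eq {k : ι → ℕ} {F : ι → Finset V}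
    (hF : F ∈ Fintype.piFinset fun i => G.indepSetFinset (k i)) :
    #{c : (Σ v, Fin (α v)) → ι | IsColoringWithClassSizes (cliqueExp G α) k c ∧
        vertexClasses c = F} = ∏ v, if #{i | v ∈ F i} = α v then (α v)! else 0 := by
  simp only [Fintype.mem_piFinset, mem_indepSetFinset_iff, isNIndepSet_iff] at hF
  have hsizes : ∀ c : (Σ v, Fin (α v)) → ι, IsColoringWithClassSizes (cliqueExp G α) k c ∧
      vertexClasses c = F ↔ (∀ x y, (cliqueExp G α).Adj x y → c x ≠ c y) ∧ vertexClasses c = F := by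
    refine fun c => ⟨fun h => ⟨h.1.1, h.2⟩, fun ⟨hc, hF'⟩ => ⟨⟨hc, fun i => ?_⟩, hF'⟩⟩
    rw [card_colorClass_eq_card_vertexClasses ((isProper_cliqueExp_iff c).1 hc).1, hF', (hF i).2]
  rw [← Fintype.card_subtype, Fintype.card_congr ((Equiv.subtypeEquivRight hsizes).trans
    (properColoringsFiberEquiv fun i => (hF i).1)), Fintype.card_pi]
  simp_rw [card_equiv_fin, Fintype.card_subtype]

variable (G α) in
theorem card_coloringsWithClassSizes_cliqueExp (k : ι → ℕ) :
    Fintype.card {c // IsColoringWithClassSizes (cliqueExp G α) k c} =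
      (∏ v, (α v)!) * #(indepCovers G k α) := by
  have hmaps : ∀ c ∈ ({c | IsColoringWithClassSizes (cliqueExp G α) k c} : Finset _),
      vertexClasses c ∈ Fintype.piFinset fun i => G.indepSetFinset (k i) := by
    intro c hc
    have hcol := (mem_filter.1 hc).2
    have hproper := (isProper_cliqueExp_iff c).1 hcol.1
    simp only [Fintype.mem_piFinset, mem_indepSetFinset_iff, isNIndepSet_iff]
    exact fun i => ⟨hproper.2 i,
      (card_colorClass_eq_card_vertexClasses hproper.1 i).symm.trans (hcol.2 i)⟩
  rw [Fintype.card_subtype, card_eq_sum_card_fiberwise hmaps, indepCovers, card_filter, mul_sum]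
  refine sum_congr rfl fun F hF => ?_
  rw [filter_filter, card_coloringsWithClassSizes_of_vertexClasses_eq hF, Fintype.prod_ite_zero,
    mul_ite, mul_one, mul_zero]

end CliqueExpansion

theorem stmt13_general {V : Type*} [Fintype V] (G : SimpleGraph V)
    (α : V →₀ ℕ) :
    ((∏ v : V, ((α v).factorial : ℚ)) •
        (fun d => MvPolynomial.coeff α (TGF G d) : MvPowerSeries ℕ ℚ)) =
      XG (cliqueExp G fun v => α v) := by
  funext d
  change (∏ v, ((α v)! : ℚ)) * coeff α (TGF G d) =
    Nat.card {c // IsColoringWithClassSizes (cliqueExp G α) d c}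
  rw [TGF_apply, coeff_prod_eGraph, Nat.card_congr (coloringsEquivSupport _ d),
    Nat.card_eq_fintype_card, card_coloringsWithClassSizes_cliqueExp]
  norm_cast

/-- the coefficient of `v^α` in `T(x,v) = Σ_λ m_λ(x) e^G_λ(v)`,
multiplied by `∏_v α(v)!`, is the chromatic symmetric function of the clique
expansion `G^α`. -/
theorem stmt13 {V : Type*} [Fintype V] [DecidableEq V] (G : SimpleGraph V)
    (α : V →₀ ℕ) :
    ((∏ v : V, ((α v).factorial : ℚ)) •
        (fun d => MvPolynomial.coeff α (TGF G d) : MvPowerSeries ℕ ℚ)) =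
      XG (cliqueExp G fun v => α v) :=
  stmt13_general G α
end
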